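/- arXiv:1109.1153 — 2 statements merged into one kernel-verified Lean document; each statement's English description precedes it below -/
import Mathlib

section
/- Let Ω = ℝ²∖𝒞 be the exterior of a compact simply connected set whose boundary is a C^∞ Jordan curve except at finitely many corner points, all of angles greater than π/2, with Riemann map 𝒯. Fix 𝐓* > 0, R_{𝐓*} > 0, r₁ > 0, r_∞ > 0 and α ≥ 0, and let ω : [0,𝐓*] × Ω → ℝ be measurable with ω(t,·) ≤ 0 a.e., ‖ω(t,·)‖_{L¹(Ω)} = r₁ and ‖ω(t,·)‖_{L^∞(Ω)} ≤ r_∞ for all t ∈ [0,𝐓*], and supp ω(t,·) ⊂ B(0,R_{𝐓*}) for all t ∈ [0,𝐓*]. Then there exists a constant C₂ > 0 such that L₁(t,x) ≥ C₂ (|𝒯(x)| − 1) for all x ∈ B(0,R_{𝐓*}) ∩ Ω and all t ∈ [0,𝐓*]. -/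
noncomputable section
open MeasureTheory Filter Metric Complex Set

/-! Identify ℝ² with ℂ.  Basic vector-calculus notions. -/

/-- Real (Euclidean) dot product on ℂ ≅ ℝ². -/
def dotR (u v : ℂ) : ℝ := (u * (starRingEnd ℂ v)).re

/-- `z^⊥ = (−z₂, z₁)`. -/
def perp (z : ℂ) : ℂ := Complex.I * z

/-- `z* = z/|z|²`. -/
def cstar (z : ℂ) : ℂ := z / ((‖z‖ : ℂ) ^ 2)

/-- Gradient of a real-valued function on ℂ ≅ ℝ², as a vector in ℂ. -/
def grad (φ : ℂ → ℝ) (x : ℂ) : ℂ :=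
  (fderiv ℝ φ x 1 : ℝ) + (fderiv ℝ φ x Complex.I : ℝ) * Complex.I

/-- Divergence `∂₁v₁ + ∂₂v₂` of a vector field on ℂ ≅ ℝ². -/
def div2 (v : ℂ → ℂ) (x : ℂ) : ℝ :=
  (fderiv ℝ v x 1).re + (fderiv ℝ v x Complex.I).im

/-- Curl `∂₁v₂ − ∂₂v₁` of a vector field on ℂ ≅ ℝ². -/
def curl2 (v : ℂ → ℂ) (x : ℂ) : ℝ :=
  (fderiv ℝ v x 1).im - (fderiv ℝ v x Complex.I).re

/-- `∂Ω` has a corner of angle `α` at `z₀`: locally `Ω` coincides with the sector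
`{z₀ + r e^{iθ} : r > 0, θ₀ < θ < θ₀ + α}`. -/
def HasCornerOfAngle (Ω : Set ℂ) (z₀ : ℂ) (α : ℝ) : Prop :=
  ∃ r₀ > (0:ℝ), ∃ θ₀ : ℝ,
    Ω ∩ Metric.ball z₀ r₀ =
      {z : ℂ | ∃ r : ℝ, 0 < r ∧ ∃ θ : ℝ, θ₀ < θ ∧ θ < θ₀ + α ∧
        z = z₀ + (r : ℂ) * Complex.exp (θ * Complex.I)} ∩ Metric.ball z₀ r₀

/-- The boundary of `Ω` is a `C^∞` Jordan curve except at finitely many corner points. -/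
structure SingularBoundary (Ω : Set ℂ) where
  corners : Finset ℂ
  angle : ℂ → ℝ
  corners_bdry : ∀ z ∈ corners, z ∈ frontier Ω
  angle_pos : ∀ z ∈ corners, 0 < angle z
  angle_le : ∀ z ∈ corners, angle z ≤ 2 * Real.pi
  corner_at : ∀ z ∈ corners, HasCornerOfAngle Ω z (angle z)
  curve : ℝ → ℂ
  curve_periodic : Function.Periodic curve 1
  curve_cont : Continuous curve
  curve_inj : Set.InjOn curve (Set.Ico 0 1)
  curve_image : curve '' Set.Ico 0 1 = frontier Ω
  curve_smooth : ∀ t : ℝ, curve t ∉ corners → ContDiffAt ℝ (⊤ : ℕ∞) curve t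
  curve_reg : ∀ t : ℝ, curve t ∉ corners → deriv curve t ≠ 0

/-- All corners have angle greater than `π/2`. -/
def SingularBoundary.Obtuse {Ω : Set ℂ} (B : SingularBoundary Ω) : Prop :=
  ∀ z ∈ B.corners, Real.pi / 2 < B.angle z

/-- Normalized Riemann map of an exterior domain onto the exterior of the unit disk. -/
def IsExtRiemannMap (Ω : Set ℂ) (T : ℂ → ℂ) : Prop :=
  DifferentiableOn ℂ T Ω ∧ Set.BijOn T Ω {z : ℂ | 1 < ‖z‖} ∧
  Tendsto (fun z => ‖T z‖) (Bornology.cobounded ℂ) atTop ∧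
  ∃ lam : ℝ, 0 < lam ∧ Tendsto (fun z => T z / z) (Bornology.cobounded ℂ) (nhds (lam : ℂ))

/-- Normalized Riemann map of a bounded simply connected domain onto the unit disk. -/
def IsIntRiemannMap (Ω : Set ℂ) (T : ℂ → ℂ) : Prop :=
  DifferentiableOn ℂ T Ω ∧ Set.BijOn T Ω (Metric.ball 0 1) ∧
  ∃ z₀ ∈ Ω, T z₀ = 0 ∧ ∃ lam : ℝ, 0 < lam ∧ deriv T z₀ = (lam : ℂ)

/-- The Biot–Savart kernel `K_Ω(x,y)`; `D𝒯(x)^T v` is `conj(𝒯'(x)) ⬝ v` for holomorphic `𝒯`. -/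
def biotKernel (T : ℂ → ℂ) (x y : ℂ) : ℂ :=
  (1 / (2 * Real.pi)) •
    ((starRingEnd ℂ (deriv T x)) * perp (cstar (T x - T y) - cstar (T x - cstar (T y))))

/-- `K_Ω[ω](x) = ∫_Ω K_Ω(x,y) ω(y) dy`. -/
def KOp (Ω : Set ℂ) (T : ℂ → ℂ) (ω : ℂ → ℝ) (x : ℂ) : ℂ :=
  ∫ y in Ω, ω y • biotKernel T x y

/-- The harmonic vector field `H_Ω(x) = (1/2π) D𝒯(x)^T 𝒯(x)^⊥/|𝒯(x)|²`. -/
def HVec (T : ℂ → ℂ) (x : ℂ) : ℂ :=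
  (1 / (2 * Real.pi)) • ((starRingEnd ℂ (deriv T x)) * perp (cstar (T x)))

/-- The operator `R[ω]`. -/
def ROp (Ω : Set ℂ) (T : ℂ → ℂ) (ω : ℂ → ℝ) (x : ℂ) : ℂ :=
  ∫ y in Ω, ω y • perp (cstar (T x - T y) - cstar (T x - cstar (T y)))

/-- The function `L₁(t,x)` (here for a fixed time slice `ω`). -/
def L1fun (Ω : Set ℂ) (T : ℂ → ℂ) (α : ℝ) (ω : ℂ → ℝ) (x : ℂ) : ℝ :=
  (1 / (2 * Real.pi)) *
      (∫ y in Ω, Real.log (‖T x - T y‖ / (‖T x - cstar (T y)‖ * ‖T y‖)) * ω y)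
    + (α / (2 * Real.pi)) * Real.log ‖T x‖

/-- Weak formulation of `curl u = ω` on `Ω`. -/
def WeakCurlEq (Ω : Set ℂ) (u : ℂ → ℂ) (ω : ℂ → ℝ) : Prop :=
  ∀ φ : ℂ → ℝ, ContDiff ℝ (⊤ : ℕ∞) φ → HasCompactSupport φ → tsupport φ ⊆ Ω →
    ∫ x in Ω, ω x * φ x = - ∫ x in Ω, dotR (u x) (perp (grad φ x))

/-- Weak divergence-free and tangency condition: `∫_Ω u·∇φ = 0` for all `φ ∈ C¹_c(closure Ω)`. -/
def WeakDivTangency (Ω : Set ℂ) (u : ℂ → ℂ) : Prop :=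
  ∀ φ : ℂ → ℝ, ContDiff ℝ 1 φ → HasCompactSupport φ →
    ∫ x in Ω, dotR (u x) (grad φ x) = 0

/-- Index (winding number) of a `C¹` loop `c : ℝ → ℂ` of period one around a point `a`. -/
def loopIndex (c : ℝ → ℂ) (a : ℂ) : ℂ :=
  (1 / (2 * Real.pi * Complex.I)) * ∫ t in (0:ℝ)..1, deriv c t / (c t - a)

/-- Circulation `∮ u·τ̂ ds` of a vector field along a loop of period one. -/
def circAlong (c : ℝ → ℂ) (u : ℂ → ℂ) : ℝ :=
  ∫ t in (0:ℝ)..1, dotR (u (c t)) (deriv c t)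

/-- A counter-clockwise smooth Jordan loop in `Ω` enclosing the set `C`
and not enclosing (nor meeting) the set `S`. -/
def SeparatingLoop (Ω : Set ℂ) (C S : Set ℂ) (c : ℝ → ℂ) : Prop :=
  ContDiff ℝ (⊤ : ℕ∞) c ∧ Function.Periodic c 1 ∧ Set.InjOn c (Set.Ico 0 1) ∧
  Set.range c ⊆ Ω ∧ (∀ a ∈ C, loopIndex c a = 1) ∧ (∀ a ∈ S, loopIndex c a = 0)

/-- Conditions on the initial data (minus decay at infinity). -/
def InitialData (Ω : Set ℂ) (u₀ : ℂ → ℂ) (ω₀ : ℂ → ℝ) : Prop :=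
  (∀ K : Set ℂ, IsCompact K → K ⊆ closure Ω →
      IntegrableOn (fun x => ‖u₀ x‖ ^ 2) K volume) ∧
  WeakCurlEq Ω u₀ ω₀ ∧
  (∃ C : ℝ, ∀ x, |ω₀ x| ≤ C) ∧ HasCompactSupport ω₀ ∧ tsupport ω₀ ⊆ Ω ∧
  WeakDivTangency Ω u₀

/-- Weak (distributional) solution of the Euler equations on `Ω` with initial datum `u₀`. -/
def WeakEulerSolution (Ω : Set ℂ) (u₀ : ℂ → ℂ) (u : ℝ → ℂ → ℂ) : Prop :=
  (∀ φ : ℝ → ℂ → ℝ, ContDiff ℝ 1 (fun p : ℝ × ℂ => φ p.1 p.2) →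
      HasCompactSupport (fun p : ℝ × ℂ => φ p.1 p.2) →
      ∫ t in Set.Ioi (0:ℝ), ∫ x in Ω, dotR (u t x) (grad (φ t) x) = 0) ∧
  (∀ φ : ℝ → ℂ → ℂ, ContDiff ℝ (⊤ : ℕ∞) (fun p : ℝ × ℂ => φ p.1 p.2) →
      (∃ Tmax : ℝ, ∀ t x, Tmax ≤ t → φ t x = 0) →
      (∃ K : Set ℂ, IsCompact K ∧ K ⊆ Ω ∧ ∀ t x, φ t x ≠ 0 → x ∈ K) →
      (∀ t x, div2 (φ t) x = 0) →
      ∫ t in Set.Ioi (0:ℝ), ∫ x in Ω,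
          (dotR (u t x) (deriv (fun s => φ s x) t)
            + dotR (u t x) (fderiv ℝ (φ t) x (u t x)))
        = - ∫ x in Ω, dotR (u₀ x) (φ 0 x))

/-- The regularity class `u ∈ L^∞_loc(ℝ⁺; L²_loc(S))`, `curl u = ω ∈ L^∞(ℝ⁺; L¹ ∩ L^∞(Ω))`. -/
def SolutionClass (Ω S : Set ℂ) (u : ℝ → ℂ → ℂ) (ω : ℝ → ℂ → ℝ) : Prop :=
  (∀ T > (0:ℝ), ∀ K : Set ℂ, IsCompact K → K ⊆ S → ∃ C : ℝ,
      ∀ t ∈ Set.Icc (0:ℝ) T, IntegrableOn (fun x => ‖u t x‖ ^ 2) K volume ∧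
        ∫ x in K, ‖u t x‖ ^ 2 ≤ C) ∧
  (∀ t ≥ (0:ℝ), WeakCurlEq Ω (u t) (ω t)) ∧
  (∃ C : ℝ, ∀ t ≥ (0:ℝ), IntegrableOn (ω t) Ω volume ∧
      (∫ x in Ω, |ω t x|) ≤ C ∧ ∀ x, |ω t x| ≤ C)

/-- Weak solution of the linear transport equation `∂ₜω + u·∇ω = 0` on `ℝ²` with datum `ω₀`. -/
def WeakTransport (u : ℝ → ℂ → ℂ) (ω : ℝ → ℂ → ℝ) (ω₀ : ℂ → ℝ) : Prop :=
  ∀ φ : ℝ → ℂ → ℝ, ContDiff ℝ (⊤ : ℕ∞) (fun p : ℝ × ℂ => φ p.1 p.2) →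
    HasCompactSupport (fun p : ℝ × ℂ => φ p.1 p.2) →
    (∫ t in Set.Ioi (0:ℝ), ∫ x : ℂ,
        ω t x * (deriv (fun s => φ s x) t + dotR (u t x) (grad (φ t) x)))
      + (∫ x : ℂ, ω₀ x * φ 0 x) = 0

/-- The velocity field reconstructed from vorticity and circulation in an exterior domain. -/
def velocity (Ω : Set ℂ) (T : ℂ → ℂ) (γ : ℝ) (ω : ℂ → ℝ) (x : ℂ) : ℂ :=
  KOp Ω T ω x + (γ + ∫ y in Ω, ω y) • HVec T x

/-- Extension by zero outside `Ω`. -/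
def extZero (Ω : Set ℂ) (u : ℂ → ℂ) : ℂ → ℂ := Set.indicator Ω u
/-! ### Auxiliary lemmas for `L1_lower_bound` -/
open Bornology
open scoped Topology ENNReal

lemma norm_sq_complex (z : ℂ) : ‖z‖^2 = z.re^2 + z.im^2 := by
  rw [Complex.sq_norm, Complex.normSq_apply]; ring

lemma cstar_coords (b : ℂ) : (cstar b).re = b.re / (b.re^2 + b.im^2) ∧ (cstar b).im = b.im / (b.re^2+b.im^2) := by
  unfold cstar
  have h : ((‖b‖:ℂ))^2 = ((b.re^2 + b.im^2 : ℝ) : ℂ) := by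
    rw [← Complex.ofReal_pow]
    exact_mod_cast congrArg (fun r : ℝ => (r : ℂ)) (norm_sq_complex b)
  rw [h]
  exact ⟨Complex.div_ofReal_re b _, Complex.div_ofReal_im b _⟩

lemma cstar_identity (a b : ℂ) (hb : b ≠ 0) :
    ‖a - cstar b‖^2 * ‖b‖^2 = ‖a - b‖^2 + (‖a‖^2 - 1) * (‖b‖^2 - 1) := by
  have hn : b.re^2 + b.im^2 ≠ 0 := by
    intro h
    apply hb
    have h1 : b.re = 0 := by nlinarith [sq_nonneg b.re, sq_nonneg b.im]
    have h2 : b.im = 0 := by nlinarith [sq_nonneg b.re, sq_nonneg b.im]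
    exact Complex.ext h1 h2
  obtain ⟨hre, him⟩ := cstar_coords b
  simp only [norm_sq_complex, Complex.sub_re, Complex.sub_im, hre, him]
  field_simp
  ring

lemma measurable_cstar : Measurable cstar := by
  unfold cstar
  exact measurable_id.div ((Complex.measurable_ofReal.comp measurable_norm).pow measurable_const)

lemma log_one_add_ge {u : ℝ} (h0 : 0 ≤ u) (h1 : u ≤ 1) : Real.log 2 * u ≤ Real.log (1 + u) := by
  have hexp : Real.exp (u * Real.log 2) ≤ 1 + u := by
    have hc := convexOn_exp.2 (Set.mem_univ (0:ℝ)) (Set.mem_univ (Real.log 2))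
      (by linarith : (0:ℝ) ≤ 1 - u) h0 (by ring)
    simp only [smul_eq_mul, mul_zero, zero_add, Real.exp_zero, mul_one,
      Real.exp_log (by norm_num : (0:ℝ) < 2)] at hc
    calc Real.exp (u * Real.log 2) = Real.exp ((1-u) * 0 + u * Real.log 2) := by ring_nf
    _ ≤ (1-u) * 1 + u * 2 := by simpa using hc
    _ = 1 + u := by ring
  have := (Real.le_log_iff_exp_le (by linarith : (0:ℝ) < 1 + u)).mpr hexp
  linarith [this]

lemma sq_ident (a b : ℂ) (hb : b ≠ 0) :
    (‖a - cstar b‖ * ‖b‖)^2 = ‖a - b‖^2 + (‖a‖^2 - 1) * (‖b‖^2 - 1) := by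
  rw [mul_pow]; exact cstar_identity a b hb

lemma log_ratio_nonpos {a b : ℂ} (ha : 1 ≤ ‖a‖) (hb : 1 ≤ ‖b‖) :
    Real.log (‖a - b‖ / (‖a - cstar b‖ * ‖b‖)) ≤ 0 := by
  have hb0 : b ≠ 0 := by intro h; rw [h] at hb; simp at hb; linarith
  have hPn : 0 ≤ (‖a‖^2 - 1) * (‖b‖^2 - 1) :=
    mul_nonneg (by nlinarith) (by nlinarith)
  have hq : ‖a - b‖^2 ≤ (‖a - cstar b‖ * ‖b‖)^2 := by
    rw [sq_ident a b hb0]; linarith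
  have hle : ‖a - b‖ ≤ ‖a - cstar b‖ * ‖b‖ :=
    le_of_pow_le_pow_left₀ two_ne_zero (by positivity) hq
  rcases eq_or_lt_of_le (by positivity : (0:ℝ) ≤ ‖a - cstar b‖ * ‖b‖) with h | h
  · rw [← h, div_zero]; simp
  · exact Real.log_nonpos (by positivity) (div_le_one_of_le₀ hle (by positivity))

lemma neg_log_ratio_eq {a b : ℂ} (ha : 1 < ‖a‖) (hb : 1 < ‖b‖) (hab : a ≠ b) :
    - Real.log (‖a - b‖ / (‖a - cstar b‖ * ‖b‖))
      = (1/2) * Real.log (1 + (‖a‖^2 - 1) * (‖b‖^2 - 1) / ‖a - b‖^2) := by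
  have hb0 : b ≠ 0 := by intro h; rw [h] at hb; simp at hb; linarith
  have hp : 0 < ‖a - b‖ := by rw [norm_pos_iff]; exact sub_ne_zero_of_ne hab
  have hP : 0 < (‖a‖^2 - 1) * (‖b‖^2 - 1) := mul_pos (by nlinarith) (by nlinarith)
  have hid := sq_ident a b hb0
  have hq : 0 < ‖a - cstar b‖ * ‖b‖ := by
    rcases lt_or_eq_of_le (by positivity : (0:ℝ) ≤ ‖a - cstar b‖ * ‖b‖) with h | h
    · exact h
    · exfalso; rw [← h] at hid; nlinarith
  rw [Real.log_div hp.ne' hq.ne']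
  have harg : 1 + (‖a‖^2 - 1) * (‖b‖^2 - 1) / ‖a - b‖^2 = (‖a - cstar b‖ * ‖b‖)^2 / ‖a - b‖^2 := by
    have hp2 : ‖a - b‖^2 ≠ 0 := by positivity
    rw [hid, add_div, div_self hp2]
  rw [harg, Real.log_div (by positivity) (by positivity), Real.log_pow, Real.log_pow]
  push_cast
  ring

lemma neg_log_ratio_ge {a b : ℂ} (ha : 1 < ‖a‖) (hb : 1 < ‖b‖) (hab : a ≠ b)
    {ε M : ℝ} (hε : 0 < ε) (hεb : ε ≤ ‖b‖^2 - 1) (haM : ‖a‖ ≤ M) (hbM : ‖b‖ ≤ M) :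
    Real.log 2 / 2 * (min (ε/(4*M^2)) (1/M) * (‖a‖ - 1))
      ≤ - Real.log (‖a - b‖ / (‖a - cstar b‖ * ‖b‖)) := by
  have hM : 1 < M := lt_of_lt_of_le ha haM
  have hp : 0 < ‖a - b‖ := by rw [norm_pos_iff]; exact sub_ne_zero_of_ne hab
  set u : ℝ := min (ε/(4*M^2)) (1/M) * (‖a‖ - 1) with hu
  have hmin1 : min (ε/(4*M^2)) (1/M) ≤ ε/(4*M^2) := min_le_left _ _
  have hmin2 : min (ε/(4*M^2)) (1/M) ≤ 1/M := min_le_right _ _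
  have hminpos : 0 < min (ε/(4*M^2)) (1/M) := lt_min (by positivity) (by positivity)
  have hu0 : 0 ≤ u := by have := sub_nonneg.mpr ha.le; positivity
  have hu1 : u ≤ 1 := by
    have h1 : u ≤ 1/M * (‖a‖ - 1) := mul_le_mul_of_nonneg_right hmin2 (by linarith)
    have h2 : 1/M * (‖a‖ - 1) ≤ 1/M * (M - 1) :=
      mul_le_mul_of_nonneg_left (by linarith) (by positivity)
    have hM0 : (0:ℝ) < M := by linarith
    calc u ≤ 1/M * (M-1) := le_trans h1 h2
    _ ≤ 1 := by rw [div_mul_eq_mul_div, one_mul, div_le_one hM0]; linarith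
  have hus : u ≤ (‖a‖^2 - 1) * (‖b‖^2 - 1) / ‖a - b‖^2 := by
    rw [le_div_iff₀ (by positivity)]
    have hpab : ‖a - b‖ ≤ 2*M := by
      calc ‖a - b‖ ≤ ‖a‖ + ‖b‖ := norm_sub_le a b
      _ ≤ 2*M := by linarith
    have h2 : ‖a - b‖^2 ≤ 4*M^2 := by nlinarith
    have h3 : u * ‖a-b‖^2 ≤ ε/(4*M^2) * (‖a‖-1) * (4*M^2) := by
      have h3' : u ≤ ε/(4*M^2) * (‖a‖-1) := mul_le_mul_of_nonneg_right hmin1 (by linarith)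
      nlinarith [sq_nonneg (‖a-b‖)]
    have h4 : ε/(4*M^2) * (‖a‖-1) * (4*M^2) = ε * (‖a‖-1) := by field_simp
    have h5 : ε * (‖a‖-1) ≤ (‖a‖^2-1) * (‖b‖^2-1) := by
      nlinarith [mul_nonneg (by nlinarith : (0:ℝ) ≤ ‖a‖^2 - ‖a‖) hε.le,
        mul_nonneg (by nlinarith : (0:ℝ) ≤ ‖a‖^2 - 1) (by linarith : (0:ℝ) ≤ ‖b‖^2 - 1 - ε)]
    linarith
  rw [neg_log_ratio_eq ha hb hab]
  have hlog : Real.log (1 + u) ≤ Real.log (1 + (‖a‖^2-1)*(‖b‖^2-1)/‖a-b‖^2) :=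
    Real.log_le_log (by linarith) (by linarith)
  have hexp := log_one_add_ge hu0 hu1
  calc Real.log 2 / 2 * u = (1/2) * (Real.log 2 * u) := by ring
  _ ≤ (1/2) * Real.log (1+u) := by linarith
  _ ≤ (1/2) * Real.log (1 + (‖a‖^2-1)*(‖b‖^2-1)/‖a-b‖^2) := by linarith

lemma neg_log_ratio_le {a b : ℂ} (ha : 1 < ‖a‖) (hb : 1 < ‖b‖)
    {d M : ℝ} (hd : 0 < d) (hdp : d ≤ ‖a - b‖) (haM : ‖a‖ ≤ M) (hbM : ‖b‖ ≤ M) :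
    |Real.log (‖a - b‖ / (‖a - cstar b‖ * ‖b‖))| ≤ (1/2) * Real.log (1 + M^4/d^2) := by
  have hab : a ≠ b := by
    intro h; rw [h] at hdp; simp at hdp; linarith
  have habs : |Real.log (‖a - b‖ / (‖a - cstar b‖ * ‖b‖))|
      = - Real.log (‖a - b‖ / (‖a - cstar b‖ * ‖b‖)) :=
    abs_of_nonpos (log_ratio_nonpos ha.le hb.le)
  rw [habs, neg_log_ratio_eq ha hb hab]
  have e1 : ‖a‖^2 - 1 ≤ M^2 := by nlinarith
  have e2 : ‖b‖^2 - 1 ≤ M^2 := by nlinarith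
  have e3 : (0:ℝ) ≤ ‖b‖^2 - 1 := by nlinarith
  have e4 : (0:ℝ) ≤ ‖a‖^2 - 1 := by nlinarith
  have hnum : (‖a‖^2-1) * (‖b‖^2-1) ≤ M^4 := by nlinarith
  have hp : 0 < ‖a - b‖ := by rw [norm_pos_iff]; exact sub_ne_zero_of_ne hab
  have h1 : (‖a‖^2-1)*(‖b‖^2-1)/‖a-b‖^2 ≤ M^4/d^2 :=
    div_le_div₀ (by positivity) hnum (by positivity) (by nlinarith)
  have hlog : Real.log (1 + (‖a‖^2-1)*(‖b‖^2-1)/‖a-b‖^2) ≤ Real.log (1 + M^4/d^2) :=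
    Real.log_le_log (by positivity) (by linarith)
  linarith

lemma log_bound_aux {Mq c r : ℝ} (n : ℕ) (hM : 0 ≤ Mq) (hc : 0 < c) (hr : 0 < r) :
    Real.log (1 + Mq/(c*(min 1 r)^n)^2)
      ≤ Real.log (1 + Mq/c^2) + 2*n*(max 0 (-Real.log r)) := by
  set s : ℝ := min 1 r with hs
  have hs0 : 0 < s := lt_min one_pos hr
  have hs1 : s ≤ 1 := min_le_left _ _
  set e : ℝ := s^n with he
  have he0 : 0 < e := by positivity
  have he1 : e ≤ 1 := pow_le_one₀ hs0.le hs1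
  have he2 : (0:ℝ) < e^2 := by positivity
  have hK : (0:ℝ) ≤ Mq/c^2 := by positivity
  have hstep : 1 + Mq/(c*e)^2 ≤ (1+Mq/c^2)/e^2 := by
    rw [le_div_iff₀ he2]
    have expand : (1 + Mq/(c*e)^2)*e^2 = e^2 + Mq/c^2 := by
      field_simp
    rw [expand]
    nlinarith
  have hlog1 : Real.log (1 + Mq/(c*e)^2) ≤ Real.log ((1+Mq/c^2)/e^2) :=
    Real.log_le_log (by positivity) hstep
  have hlog2 : Real.log ((1+Mq/c^2)/e^2) = Real.log (1+Mq/c^2) - Real.log (e^2) :=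
    Real.log_div (by positivity) (by positivity)
  have hloge : Real.log (e^2) = 2*(n:ℝ)*Real.log s := by
    rw [he, ← pow_mul, Real.log_pow]
    push_cast
    ring
  have hlogs : - Real.log s = max 0 (- Real.log r) := by
    by_cases hr1 : 1 ≤ r
    · rw [hs, min_eq_left hr1, Real.log_one, neg_zero]
      rw [max_eq_left (neg_nonpos_of_nonneg (Real.log_nonneg hr1))]
    · push_neg at hr1
      rw [hs, min_eq_right hr1.le]
      rw [max_eq_right (le_of_lt (neg_pos.mpr (Real.log_neg hr hr1)))]
  calc Real.log (1 + Mq/(c*e)^2) ≤ Real.log (1+Mq/c^2) - Real.log (e^2) := by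
        rw [← hlog2]; exact hlog1
  _ = Real.log (1+Mq/c^2) + 2*(n:ℝ)*(- Real.log s) := by rw [hloge]; ring
  _ = Real.log (1+Mq/c^2) + 2*(n:ℝ)*(max 0 (- Real.log r)) := by rw [hlogs]

lemma integrable_maxlog (x : ℂ) :
    Integrable (fun y : ℂ => max 0 (- Real.log ‖y - x‖)) volume := by
  set f : ℂ → ℝ := fun y => max 0 (- Real.log ‖y - x‖) with hf
  have hmeas : Measurable f := by
    apply measurable_const.max
    exact (Real.measurable_log.comp ((continuous_norm.comp (continuous_id.sub continuous_const)).measurable)).neg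
  have hnonneg : ∀ y, 0 ≤ f y := fun y => le_max_left _ _
  constructor
  · exact hmeas.aestronglyMeasurable
  · rw [hasFiniteIntegral_iff_norm]
    have heq : ∀ y, ENNReal.ofReal ‖f y‖ = ENNReal.ofReal (f y) := by
      intro y; rw [Real.norm_eq_abs, _root_.abs_of_nonneg (hnonneg y)]
    simp only [heq]
    rw [lintegral_eq_lintegral_meas_le volume (Eventually.of_forall hnonneg) hmeas.aemeasurable]
    have hsub : ∀ t : ℝ, t ∈ Ioi (0:ℝ) → volume {a : ℂ | t ≤ f a}
        ≤ volume (closedBall x (Real.exp (-t))) := by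
      intro t ht
      apply measure_mono
      intro a ha
      simp only [Set.mem_setOf_eq, hf] at ha
      rw [Metric.mem_closedBall, Complex.dist_eq]
      have hlt : t ≤ - Real.log ‖a - x‖ := by
        rcases le_max_iff.mp ha with h | h
        · exfalso; have := mem_Ioi.mp ht; linarith
        · exact h
      by_cases ha0 : a = x
      · rw [ha0, sub_self, norm_zero]
        positivity
      · have hn : 0 < ‖a - x‖ := norm_pos_iff.mpr (sub_ne_zero_of_ne ha0)
        have : Real.log ‖a - x‖ ≤ -t := by linarith
        exact ((Real.log_le_iff_le_exp hn).mp this)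
    calc ∫⁻ t in Ioi (0:ℝ), volume {a : ℂ | t ≤ f a}
        ≤ ∫⁻ t in Ioi (0:ℝ), volume (closedBall x (Real.exp (-t))) := by
          apply setLIntegral_mono' measurableSet_Ioi hsub
    _ = ∫⁻ t in Ioi (0:ℝ), ENNReal.ofReal ((Real.exp (-t))^2) * volume (ball (0:ℂ) 1) := by
          apply setLIntegral_congr_fun measurableSet_Ioi
          intro t ht
          dsimp only
          rw [Measure.addHaar_closedBall volume x (Real.exp_pos (-t)).le, Complex.finrank_real_complex]
    _ < ⊤ := by
          rw [lintegral_mul_const' _ _ measure_ball_lt_top.ne]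
          apply ENNReal.mul_lt_top ?_ measure_ball_lt_top
          have hb : ∀ t : ℝ, t ∈ Ioi (0:ℝ) → ENNReal.ofReal ((Real.exp (-t))^2) ≤ ENNReal.ofReal (Real.exp (-1*t)) := by
            intro t ht
            apply ENNReal.ofReal_le_ofReal
            rw [neg_one_mul]
            have h1 : Real.exp (-t) ≤ 1 := Real.exp_le_one_iff.mpr (by
              simp only [Left.neg_nonpos_iff]; exact (le_of_lt ht))
            nlinarith [Real.exp_pos (-t)]
          calc ∫⁻ t in Ioi (0:ℝ), ENNReal.ofReal ((Real.exp (-t))^2)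
              ≤ ∫⁻ t in Ioi (0:ℝ), ENNReal.ofReal (Real.exp (-1*t)) :=
                setLIntegral_mono' measurableSet_Ioi hb
          _ < ⊤ := (exp_neg_integrableOn_Ioi 0 one_pos).setLIntegral_lt_top

lemma isPreconnected_norm_gt (M : ℝ) (hM : 0 < M) : IsPreconnected {w : ℂ | M < ‖w‖} := by
  have h1 : IsConnected ((Set.Ioi M) ×ˢ (sphere (0:ℂ) 1)) :=
    (isConnected_Ioi).prod (isConnected_sphere (by rw [Complex.rank_real_complex]; norm_num) 0 zero_le_one)
  have h2 : IsConnected ((fun p : ℝ × ℂ => (p.1 : ℂ) * p.2) '' ((Set.Ioi M) ×ˢ (sphere (0:ℂ) 1))) := by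
    apply h1.image
    exact (Complex.continuous_ofReal.comp continuous_fst).mul continuous_snd |>.continuousOn
  have himg : (fun p : ℝ × ℂ => (p.1 : ℂ) * p.2) '' ((Set.Ioi M) ×ˢ (sphere (0:ℂ) 1))
      = {w : ℂ | M < ‖w‖} := by
    ext w
    constructor
    · rintro ⟨⟨r, u⟩, ⟨hr, hu⟩, rfl⟩
      simp only [Set.mem_setOf_eq, norm_mul, Complex.norm_real]
      simp only [mem_sphere_iff_norm, sub_zero] at hu
      rw [hu, mul_one, Real.norm_eq_abs, abs_of_pos (lt_trans hM hr)]
      exact hr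
    · intro hw
      simp only [Set.mem_setOf_eq] at hw
      have hw0 : w ≠ 0 := by
        intro h; rw [h] at hw; simp at hw; linarith
      have hnw : (0:ℝ) < ‖w‖ := lt_trans hM hw
      refine ⟨(‖w‖, (‖w‖:ℂ)⁻¹ * w), ⟨hw, ?_⟩, ?_⟩
      · simp only [mem_sphere_iff_norm, sub_zero, norm_mul, norm_inv, Complex.norm_real,
          Real.norm_eq_abs, abs_of_pos hnw]
        rw [inv_mul_cancel₀ (ne_of_gt hnw)]
      · have hcast : ((‖w‖:ℝ):ℂ) ≠ 0 := by exact_mod_cast ne_of_gt hnw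
        show ((‖w‖:ℝ):ℂ) * (((‖w‖:ℝ):ℂ)⁻¹ * w) = w
        rw [← mul_assoc, mul_inv_cancel₀ hcast, one_mul]
  rw [← himg]
  exact h2.isPreconnected

/-- Bound for `T` on bounded subsets of `Ω`. -/
lemma exists_T_bound (C : Set ℂ) (hC : IsCompact C) (Ω : Set ℂ) (hΩ : Ω = Cᶜ)
    (T : ℂ → ℂ) (hdiff : DifferentiableOn ℂ T Ω) (hinj : Set.InjOn T Ω)
    (lam : ℝ) (hlam : 0 < lam)
    (hTz : Tendsto (fun z => T z / z) (Bornology.cobounded ℂ) (nhds (lam : ℂ)))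
    (R : ℝ) :
    ∃ M : ℝ, 1 < M ∧ ∀ x ∈ Metric.ball (0:ℂ) R ∩ Ω, ‖T x‖ ≤ M := by
  have hΩopen : IsOpen Ω := hΩ ▸ hC.isClosed.isOpen_compl
  obtain ⟨ρC, hρC⟩ := hC.isBounded.subset_closedBall 0
  have hev : ∀ᶠ z in Bornology.cobounded ℂ, ‖T z / z - lam‖ < lam/2 := by
    have := hTz (Metric.ball_mem_nhds (lam:ℂ) (by positivity : (0:ℝ) < lam/2))
    filter_upwards [this] with z hz
    simpa [Metric.mem_ball, Complex.dist_eq] using hz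
  rw [← comap_norm_atTop, Filter.eventually_comap] at hev
  rw [Filter.eventually_atTop] at hev
  obtain ⟨ρ₁, hρ₁⟩ := hev
  set ρ : ℝ := max (max ρC ρ₁) (max R 1) + 1 with hρ
  have hρpos : 0 < ρ := by
    have : (1:ℝ) ≤ max R 1 := le_max_right _ _
    have h2 : max R 1 ≤ max (max ρC ρ₁) (max R 1) := le_max_right _ _
    linarith
  have hfar : ∀ z : ℂ, ρ ≤ ‖z‖ → lam/2 * ‖z‖ ≤ ‖T z‖ ∧ ‖T z‖ ≤ 3*lam/2 * ‖z‖ := by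
    intro z hz
    have hz0 : z ≠ 0 := by
      intro h; rw [h] at hz; simp at hz; linarith
    have hzρ₁ : ρ₁ ≤ ‖z‖ := by
      have : ρ₁ ≤ max (max ρC ρ₁) (max R 1) := le_trans (le_max_right ρC ρ₁) (le_max_left _ _)
      linarith
    have h := hρ₁ ‖z‖ hzρ₁ z rfl
    have hdiv : ‖T z - lam * z‖ < lam/2 * ‖z‖ := by
      have heq : T z / z - lam = (T z - lam * z) / z := by field_simp
      rw [heq, norm_div] at h
      have hnz : 0 < ‖z‖ := lt_of_lt_of_le hρpos hz
      calc ‖T z - lam * z‖ = ‖T z - lam * z‖ / ‖z‖ * ‖z‖ := by rw [div_mul_cancel₀ _ hnz.ne']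
      _ < lam/2 * ‖z‖ := by exact mul_lt_mul_of_pos_right h hnz
    constructor
    · have h1 : ‖(lam:ℂ) * z‖ - ‖T z - lam*z‖ ≤ ‖T z‖ := by
        have := norm_sub_norm_le ((lam:ℂ)*z) (lam*z - T z)
        simp only [sub_sub_cancel] at this
        calc ‖(lam:ℂ) * z‖ - ‖T z - lam*z‖ = ‖(lam:ℂ)*z‖ - ‖lam*z - T z‖ := by rw [norm_sub_rev]
        _ ≤ ‖T z‖ := this
      have h2 : ‖(lam:ℂ) * z‖ = lam * ‖z‖ := by
        rw [norm_mul, Complex.norm_real, Real.norm_eq_abs, abs_of_pos hlam]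
      nlinarith [norm_nonneg z]
    · have h1 : ‖T z‖ ≤ ‖(lam:ℂ)*z‖ + ‖T z - lam*z‖ := by
        have := norm_add_le ((lam:ℂ)*z) (T z - lam*z)
        simpa [add_sub_cancel] using this
      have h2 : ‖(lam:ℂ) * z‖ = lam * ‖z‖ := by
        rw [norm_mul, Complex.norm_real, Real.norm_eq_abs, abs_of_pos hlam]
      nlinarith
  have hsubΩ : ∀ z : ℂ, ρ ≤ ‖z‖ → z ∈ Ω := by
    intro z hz
    rw [hΩ]
    intro hzC
    have := hρC hzC
    rw [Metric.mem_closedBall, Complex.dist_eq, sub_zero] at this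
    have hρC' : ρC ≤ max (max ρC ρ₁) (max R 1) := le_trans (le_max_left ρC ρ₁) (le_max_left _ _)
    have : ‖z‖ ≤ ρC := by exact this
    linarith
  set M₀ : ℝ := 3*lam*ρ + 2 with hM₀
  have hM₀pos : 1 < M₀ := by nlinarith
  set U : Set ℂ := {z : ℂ | ρ < ‖z‖} with hU
  have hUopen : IsOpen U := isOpen_lt continuous_const continuous_norm
  have hUΩ : U ⊆ Ω := fun z hz => hsubΩ z (le_of_lt hz)
  set V : Set ℂ := T '' U with hV
  set W : Set ℂ := {w : ℂ | M₀ < ‖w‖} with hW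
  have hVopen : IsOpen V := by
    rw [isOpen_iff_mem_nhds]
    rintro w ⟨z, hzU, rfl⟩
    have hzΩ : z ∈ Ω := hUΩ hzU
    have hA : AnalyticAt ℂ T z := hdiff.analyticAt (hΩopen.mem_nhds hzΩ)
    rcases hA.eventually_constant_or_nhds_le_map_nhds with hconst | hmap
    · exfalso
      obtain ⟨r, hr, hball⟩ := Metric.eventually_nhds_iff_ball.mp
        (hconst.and (hUopen.eventually_mem hzU))
      set z' : ℂ := z + (r/2 : ℝ)
      have hz' : z' ∈ Metric.ball z r := by
        simp only [Metric.mem_ball, Complex.dist_eq, z', add_sub_cancel_left]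
        rw [Complex.norm_real, Real.norm_eq_abs, abs_of_pos (by linarith : (0:ℝ) < r/2)]
        linarith
      obtain ⟨hTz', hz'U⟩ := hball z' hz'
      have hne : z' ≠ z := by
        simp only [z', ne_eq, add_eq_left]
        exact_mod_cast (by positivity : (0:ℝ) < r/2).ne'
      exact hne (hinj (hUΩ hz'U) hzΩ hTz')
    · apply hmap
      exact Filter.image_mem_map (hUopen.mem_nhds hzU)
  have hclos : closure V ∩ W ⊆ V := by
    rintro w ⟨hwc, hwW⟩
    obtain ⟨f, hf, hflim⟩ := mem_closure_iff_seq_limit.mp hwc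
    have hz : ∀ n, ∃ z, z ∈ U ∧ T z = f n := fun n => by
      obtain ⟨z, hz, hTz⟩ := hf n
      exact ⟨z, hz, hTz⟩
    choose g hgU hgT using hz
    have hnorm : Tendsto (fun n => ‖f n‖) atTop (𝓝 ‖w‖) := hflim.norm
    obtain ⟨Bw, hBw⟩ := hnorm.bddAbove_range
    have hgbound : ∀ n, g n ∈ Metric.closedBall (0:ℂ) (2/lam * Bw) := by
      intro n
      have h1 := (hfar (g n) (le_of_lt (hgU n))).1
      have h2 : ‖f n‖ ≤ Bw := hBw ⟨n, rfl⟩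
      rw [hgT n] at h1
      rw [Metric.mem_closedBall, Complex.dist_eq, sub_zero]
      rw [div_mul_eq_mul_div, le_div_iff₀ hlam]
      nlinarith [norm_nonneg (g n)]
    obtain ⟨z, hzB, φ, hφ, hzlim⟩ := (isCompact_closedBall (0:ℂ) (2/lam*Bw)).tendsto_subseq hgbound
    have hzρ : ρ ≤ ‖z‖ := by
      have hlim : Tendsto (fun n => ‖g (φ n)‖) atTop (𝓝 ‖z‖) := hzlim.norm
      exact ge_of_tendsto' hlim (fun n => (le_of_lt (hgU (φ n)))) |>.trans (le_refl _) |>.trans (le_refl _)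
    have hzΩ : z ∈ Ω := hsubΩ z hzρ
    have hcont : ContinuousAt T z := hdiff.continuousOn.continuousAt (hΩopen.mem_nhds hzΩ)
    have hTzw : T z = w := by
      have h1 : Tendsto (fun n => T (g (φ n))) atTop (𝓝 (T z)) := hcont.tendsto.comp hzlim
      have h2 : Tendsto (fun n => T (g (φ n))) atTop (𝓝 w) := by
        have : (fun n => T (g (φ n))) = (fun n => f (φ n)) := by
          funext n; exact hgT (φ n)
        rw [this]
        exact hflim.comp hφ.tendsto_atTop
      exact tendsto_nhds_unique h1 h2
    have hzU2 : z ∈ U := by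
      have h2 := (hfar z hzρ).2
      rw [hTzw] at h2
      have hwM : M₀ < ‖w‖ := hwW
      have : 3*lam/2 * ρ < 3*lam/2 * ‖z‖ := by nlinarith
      have hpos : 0 < 3*lam/2 := by positivity
      exact (mul_lt_mul_iff_right₀ hpos).mp this
    exact ⟨z, hzU2, hTzw⟩
  have hWV : ∃ w ∈ W, w ∈ V := by
    obtain ⟨r₀, hr₀⟩ : ∃ r : ℝ, r = max ρ (2/lam * (M₀+1)) + 1 := ⟨_, rfl⟩
    have hr₀ρ : ρ < r₀ := by
      have := le_max_left ρ (2/lam*(M₀+1)); linarith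
    have hr₀2 : 2/lam * (M₀+1) < r₀ := by
      have := le_max_right ρ (2/lam*(M₀+1)); linarith
    have hr₀pos : 0 < r₀ := lt_trans hρpos hr₀ρ
    set z₀ : ℂ := (r₀ : ℂ) with hz₀
    have hz₀n : ‖z₀‖ = r₀ := by
      simp [z₀, Complex.norm_real, Real.norm_eq_abs, abs_of_pos hr₀pos]
    have hz₀U : z₀ ∈ U := by rw [Set.mem_setOf_eq, hz₀n]; exact hr₀ρ
    have h1 := (hfar z₀ (by rw [hz₀n]; exact hr₀ρ.le)).1
    refine ⟨T z₀, ?_, ⟨z₀, hz₀U, rfl⟩⟩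
    rw [Set.mem_setOf_eq]
    rw [hz₀n] at h1
    have : lam/2 * (2/lam*(M₀+1)) < lam/2 * r₀ := by
      apply mul_lt_mul_of_pos_left hr₀2 (by positivity)
    have heq : lam/2 * (2/lam*(M₀+1)) = M₀+1 := by field_simp
    linarith
  have hWsub : W ⊆ V := by
    have hpre : IsPreconnected W := isPreconnected_norm_gt M₀ (by linarith)
    have hdisj : Disjoint V (closure V)ᶜ :=
      Set.disjoint_left.mpr (fun w hw hcl => hcl (subset_closure hw))
    have hcover : W ⊆ V ∪ (closure V)ᶜ := by
      intro w hw
      by_cases hwc : w ∈ closure V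
      · exact Or.inl (hclos ⟨hwc, hw⟩)
      · exact Or.inr hwc
    have hne : (W ∩ V).Nonempty := by
      obtain ⟨w, hwW', hwV⟩ := hWV
      exact ⟨w, hwW', hwV⟩
    exact IsPreconnected.subset_left_of_subset_union hVopen
      (isClosed_closure.isOpen_compl) hdisj hcover hne hpre
  refine ⟨M₀, hM₀pos, ?_⟩
  intro x hx
  by_contra hcon
  push_neg at hcon
  have hxW : T x ∈ W := hcon
  obtain ⟨z, hzU3, hTzx⟩ := hWsub hxW
  have hzx : z = x := hinj (hUΩ hzU3) hx.2 hTzx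
  have hxn : ‖x‖ < R := by
    have := hx.1
    rwa [Metric.mem_ball, Complex.dist_eq, sub_zero] at this
  have hRρ : R ≤ ρ := by
    have h1 : R ≤ max R 1 := le_max_left _ _
    have h2 : max R 1 ≤ max (max ρC ρ₁) (max R 1) := le_max_right _ _
    linarith
  have : ρ < ‖z‖ := hzU3
  rw [hzx] at this
  linarith

/-- Local/global lower bound for an injective holomorphic map. -/
lemma exists_local_lower_bound {Ω : Set ℂ} (hΩopen : IsOpen Ω) {T : ℂ → ℂ}
    (hdiff : DifferentiableOn ℂ T Ω) (hinj : Set.InjOn T Ω) {x : ℂ} (hx : x ∈ Ω) :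
    ∃ n : ℕ, ∃ c > (0:ℝ), ∀ y ∈ Ω, y ≠ x → c * (min 1 ‖y - x‖)^n ≤ ‖T y - T x‖ := by
  have hA : AnalyticAt ℂ T x := hdiff.analyticAt (hΩopen.mem_nhds hx)
  have hf : AnalyticAt ℂ (fun y => T y - T x) x := hA.sub analyticAt_const
  have hne : ¬ (∀ᶠ y in 𝓝 x, T y - T x = 0) := by
    intro hcon
    obtain ⟨r, hr, hball⟩ := Metric.eventually_nhds_iff_ball.mp
      (hcon.and ((hΩopen.eventually_mem hx)))
    set y : ℂ := x + (r/2 : ℝ) with hydef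
    have hy : y ∈ ball x r := by
      simp only [Metric.mem_ball, Complex.dist_eq, y, add_sub_cancel_left]
      rw [Complex.norm_real, Real.norm_eq_abs, abs_of_pos (by linarith : (0:ℝ) < r/2)]
      linarith
    obtain ⟨hTy, hyΩ⟩ := hball y hy
    have hyx : y ≠ x := by
      simp only [y, ne_eq, add_eq_left]
      exact_mod_cast (by positivity : (0:ℝ) < r/2).ne'
    exact hyx (hinj hyΩ hx (sub_eq_zero.mp hTy))
  have hord : analyticOrderAt (fun y => T y - T x) x ≠ ⊤ := fun h => hne (analyticOrderAt_eq_top.mp h)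
  obtain ⟨n, hn⟩ := Option.ne_none_iff_exists'.mp hord
  obtain ⟨g, hg, hgx, hev⟩ := (hf.analyticOrderAt_eq_natCast (n := n)).mp hn
  have hgc : ContinuousAt g x := hg.continuousAt
  have hgxpos : 0 < ‖g x‖ := norm_pos_iff.mpr hgx
  have hgev : ∀ᶠ y in 𝓝 x, ‖g x‖/2 ≤ ‖g y‖ := by
    have : ∀ᶠ y in 𝓝 x, ‖g y - g x‖ < ‖g x‖/2 := by
      have h2 := hgc.tendsto (Metric.ball_mem_nhds (g x) (half_pos hgxpos))
      filter_upwards [h2] with y hy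
      simpa [Metric.mem_ball, Complex.dist_eq] using hy
    filter_upwards [this] with y hy
    have := norm_sub_norm_le (g x) (g y)
    have h3 : ‖g x - g y‖ = ‖g y - g x‖ := norm_sub_rev _ _
    linarith [norm_sub_norm_le (g x) (g y)]
  obtain ⟨δ₀, hδ₀, hball⟩ := Metric.eventually_nhds_iff_ball.mp
    ((hev.and hgev).and (hΩopen.eventually_mem hx))
  set δ : ℝ := min δ₀ 1 with hδdef
  have hδpos : 0 < δ := lt_min hδ₀ one_pos
  have hloc : ∀ y ∈ ball x δ, y ≠ x → (‖g x‖/2) * ‖y - x‖^n ≤ ‖T y - T x‖ := by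
    intro y hy hyx
    have hy0 : y ∈ ball x δ₀ := ball_subset_ball (min_le_left _ _) hy
    obtain ⟨⟨hfac, hgy⟩, _⟩ := hball y hy0
    have : ‖T y - T x‖ = ‖y - x‖^n * ‖g y‖ := by
      rw [hfac]
      simp [norm_smul, norm_pow]
    rw [this]
    have hpow : (0:ℝ) ≤ ‖y - x‖^n := by positivity
    calc (‖g x‖/2) * ‖y-x‖^n = ‖y-x‖^n * (‖g x‖/2) := by ring
    _ ≤ ‖y-x‖^n * ‖g y‖ := mul_le_mul_of_nonneg_left hgy hpow
  have hmap : 𝓝 (T x) ≤ Filter.map T (𝓝 x) := by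
    rcases hA.eventually_constant_or_nhds_le_map_nhds with hconst | hmap
    · exact absurd (by filter_upwards [hconst] with y hy; rw [hy, sub_self]) hne
    · exact hmap
  have hVmem : T '' (ball x δ) ∈ 𝓝 (T x) := by
    apply hmap
    exact Filter.image_mem_map (Metric.ball_mem_nhds x hδpos)
  obtain ⟨ε₂, hε₂, hε₂sub⟩ := Metric.mem_nhds_iff.mp hVmem
  have hfarb : ∀ y ∈ Ω, y ∉ ball x δ → ε₂ ≤ ‖T y - T x‖ := by
    intro y hyΩ hyB
    by_contra hlt
    push_neg at hlt
    have : T y ∈ ball (T x) ε₂ := by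
      rw [Metric.mem_ball, Complex.dist_eq]
      exact lt_of_lt_of_le (by exact hlt) (le_refl _)
    obtain ⟨y', hy', hTy'⟩ := hε₂sub this
    have hy'Ω : y' ∈ Ω := (hball y' (ball_subset_ball (min_le_left _ _) hy')).2
    have heq : y' = y := hinj hy'Ω hyΩ hTy'
    rw [heq] at hy'
    exact hyB hy'
  refine ⟨n, min (‖g x‖/2) ε₂, lt_min (half_pos hgxpos) hε₂, ?_⟩
  intro y hyΩ hyx
  have hcpos : 0 < min (‖g x‖/2) ε₂ := lt_min (half_pos hgxpos) hε₂
  by_cases hyB : y ∈ ball x δ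
  · have hr : ‖y - x‖ < δ := by
      have := hyB
      rwa [Metric.mem_ball, Complex.dist_eq] at this
    have hr1 : ‖y - x‖ ≤ 1 := le_of_lt (lt_of_lt_of_le hr (min_le_right _ _))
    have hminr : min 1 ‖y - x‖ = ‖y - x‖ := min_eq_right hr1
    rw [hminr]
    calc min (‖g x‖/2) ε₂ * ‖y-x‖^n ≤ (‖g x‖/2) * ‖y-x‖^n := by
          apply mul_le_mul_of_nonneg_right (min_le_left _ _) (by positivity)
    _ ≤ ‖T y - T x‖ := hloc y hyB hyx
  · have h1 : (min 1 ‖y - x‖)^n ≤ 1 := by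
      apply pow_le_one₀ (le_min zero_le_one (norm_nonneg _)) (min_le_left _ _)
    calc min (‖g x‖/2) ε₂ * (min 1 ‖y-x‖)^n ≤ min (‖g x‖/2) ε₂ * 1 :=
          mul_le_mul_of_nonneg_left h1 hcpos.le
    _ = min (‖g x‖/2) ε₂ := mul_one _
    _ ≤ ε₂ := min_le_right _ _
    _ ≤ ‖T y - T x‖ := hfarb y hyΩ hyB

/-- Lemma `L1 est`: lower bound `L₁(t,x) ≥ C₂(|𝒯(x)|−1)` for the
Liapounov stream function when the vorticity is non-positive with constant `L¹` norm
and `α ≥ 0`. -/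
theorem L1_lower_bound
    (C : Set ℂ) (hC : IsCompact C) (hCsc : SimplyConnectedSpace ↥C)
    (Ω : Set ℂ) (hΩ : Ω = Cᶜ)
    (B : SingularBoundary Ω) (hB : B.Obtuse)
    (T : ℂ → ℂ) (hT : IsExtRiemannMap Ω T)
    (Tstar : ℝ) (hTstar : 0 < Tstar) (R : ℝ) (hR : 0 < R)
    (r₁ rinf α : ℝ) (hr₁ : 0 < r₁) (hrinf : 0 < rinf) (hα : 0 ≤ α)
    (ω : ℝ → ℂ → ℝ) (hmeas : ∀ t, Measurable (ω t))
    (hsign : ∀ t ∈ Set.Icc (0:ℝ) Tstar, ∀ᵐ x ∂(volume.restrict Ω), ω t x ≤ 0)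
    (hL1 : ∀ t ∈ Set.Icc (0:ℝ) Tstar, IntegrableOn (ω t) Ω volume ∧
        (∫ x in Ω, |ω t x|) = r₁)
    (hLinf : ∀ t ∈ Set.Icc (0:ℝ) Tstar, ∀ x : ℂ, |ω t x| ≤ rinf)
    (hsupp : ∀ t ∈ Set.Icc (0:ℝ) Tstar, ∀ x : ℂ, ω t x ≠ 0 → x ∈ Metric.ball 0 R) :
    ∃ C₂ > (0:ℝ), ∀ t ∈ Set.Icc (0:ℝ) Tstar, ∀ x ∈ Metric.ball (0:ℂ) R ∩ Ω,
      C₂ * (‖T x‖ - 1) ≤ L1fun Ω T α (ω t) x := by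
  obtain ⟨hdiff, hbij, htop, lam, hlam, hTz⟩ := hT
  have hΩopen : IsOpen Ω := hΩ ▸ hC.isClosed.isOpen_compl
  have hΩmeas : MeasurableSet Ω := hΩopen.measurableSet
  have hinj : Set.InjOn T Ω := hbij.injOn
  have hmapsTo : Set.MapsTo T Ω {z : ℂ | 1 < ‖z‖} := hbij.mapsTo
  obtain ⟨M, hM1, hMbound⟩ := exists_T_bound C hC Ω hΩ T hdiff hinj lam hlam hTz R
  -- the domain where the vorticity lives
  set D : Set ℂ := Metric.ball (0:ℂ) R ∩ Ω with hD
  have hDopen : IsOpen D := isOpen_ball.inter hΩopen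
  have hTcontD : ContinuousOn (fun y => ‖T y‖^2) D :=
    (((hdiff.continuousOn).mono Set.inter_subset_right).norm).pow 2
  -- the small sets near the boundary (in image)
  set S : ℕ → Set ℂ := fun n => D \ (D ∩ (fun y => ‖T y‖^2) ⁻¹' (Set.Ioi (1 + 1/((n:ℝ)+1)))) with hS
  have hSmeas : ∀ n, MeasurableSet (S n) := by
    intro n
    exact hDopen.measurableSet.diff
      (hTcontD.isOpen_inter_preimage hDopen isOpen_Ioi).measurableSet
  have hSsub : ∀ n, S n ⊆ D := fun n => Set.diff_subset
  have hSchar : ∀ n, ∀ y, y ∈ S n ↔ y ∈ D ∧ ‖T y‖^2 ≤ 1 + 1/((n:ℝ)+1) := by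
    intro n y
    constructor
    · rintro ⟨hyD, hyn⟩
      refine ⟨hyD, ?_⟩
      by_contra hcon
      push_neg at hcon
      exact hyn ⟨hyD, hcon⟩
    · rintro ⟨hyD, hle⟩
      exact ⟨hyD, fun hcon => absurd hle (not_le.mpr hcon.2)⟩
  have hanti : Antitone S := by
    intro n m hnm y hy
    rw [hSchar m y] at hy
    rw [hSchar n y]
    refine ⟨hy.1, hy.2.trans ?_⟩
    have : ((n:ℝ)+1) ≤ ((m:ℝ)+1) := by
      have := (Nat.cast_le (α := ℝ)).mpr hnm
      linarith
    have h2 : 1/((m:ℝ)+1) ≤ 1/((n:ℝ)+1) := by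
      apply one_div_le_one_div_of_le (by positivity) this
    linarith
  have hiInter : (⋂ n, S n) = ∅ := by
    ext y
    simp only [Set.mem_iInter, Set.mem_empty_iff_false, iff_false]
    intro hcon
    have hyD : y ∈ D := (hSsub 0) (hcon 0)
    have hT1 : 1 < ‖T y‖ := hmapsTo hyD.2
    have hbound : ∀ n : ℕ, ‖T y‖^2 - 1 ≤ 1/((n:ℝ)+1) := by
      intro n
      have := ((hSchar n y).mp (hcon n)).2
      linarith
    have hzero : ‖T y‖^2 - 1 ≤ 0 :=
      ge_of_tendsto' tendsto_one_div_add_atTop_nhds_zero_nat (fun n => hbound n)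
    nlinarith
  have hfin : volume (S 0) ≠ ⊤ := by
    apply lt_top_iff_ne_top.mp
    apply lt_of_le_of_lt (measure_mono ((hSsub 0).trans Set.inter_subset_left))
    exact measure_ball_lt_top
  have htend : Tendsto (fun n => volume (S n)) atTop (𝓝 (volume (⋂ n, S n))) :=
    tendsto_measure_iInter_atTop (fun n => (hSmeas n).nullMeasurableSet) hanti ⟨0, hfin⟩
  rw [hiInter] at htend
  simp only [measure_empty] at htend
  have hδ0 : (0:ℝ≥0∞) < ENNReal.ofReal (r₁/(2*rinf)) := by
    rw [ENNReal.ofReal_pos]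
    positivity
  obtain ⟨n₀, hn₀⟩ := (htend.eventually_lt_const hδ0).exists
  set ε : ℝ := 1/((n₀:ℝ)+1) with hε
  have hεpos : 0 < ε := by positivity
  set A : Set ℂ := S n₀ with hA
  have hAmeas : MeasurableSet A := hSmeas n₀
  have hAΩ : A ⊆ Ω := (hSsub n₀).trans Set.inter_subset_right
  have hAvol : (volume A).toReal ≤ r₁/(2*rinf) :=
    le_of_lt (ENNReal.toReal_lt_of_lt_ofReal hn₀)
  -- the constants
  set c₀ : ℝ := min (ε/(4*M^2)) (1/M) with hc₀
  have hc₀pos : 0 < c₀ := lt_min (by positivity) (by positivity)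
  set c₁ : ℝ := Real.log 2 / 2 * c₀ with hc₁
  have hc₁pos : 0 < c₁ := by
    apply mul_pos (by positivity) hc₀pos
  refine ⟨(1/(2*Real.pi)) * (c₁ * (r₁/2)), by positivity, ?_⟩
  intro t ht x hx
  have hxΩ : x ∈ Ω := hx.2
  have haT : 1 < ‖T x‖ := hmapsTo hxΩ
  have haM : ‖T x‖ ≤ M := hMbound x hx
  set X : ℝ := ‖T x‖ - 1 with hX
  have hXpos : 0 < X := by simp only [hX]; linarith
  -- the integrand
  set f : ℂ → ℝ := fun y => Real.log (‖T x - T y‖ / (‖T x - cstar (T y)‖ * ‖T y‖)) * ω t y with hf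
  set G : ℂ → ℝ := fun y => (c₁ * X) * (Aᶜ.indicator (fun y => - ω t y) y) with hG
  have hωint : IntegrableOn (ω t) Ω volume := (hL1 t ht).1
  -- measurability of f
  have hTae : AEMeasurable T (volume.restrict Ω) := hdiff.continuousOn.aemeasurable hΩmeas
  have hfm : AEStronglyMeasurable f (volume.restrict Ω) := by
    apply AEMeasurable.aestronglyMeasurable
    apply AEMeasurable.mul ?_ (hmeas t).aemeasurable
    apply (Real.measurable_log).comp_aemeasurable
    apply AEMeasurable.div
    · exact (aemeasurable_const.sub hTae).norm
    · exact ((aemeasurable_const.sub (measurable_cstar.comp_aemeasurable hTae)).norm).mul hTae.norm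
  -- local lower bounds for |T y - T x|
  obtain ⟨n, c, hcpos, hlow⟩ := exists_local_lower_bound hΩopen hdiff hinj hxΩ
  set K : ℝ := M^4/c^2 with hKdef
  have hKnn : 0 ≤ K := by positivity
  -- the dominating function
  set gdom : ℂ → ℝ := (Metric.ball (0:ℂ) R).indicator
    (fun y => rinf * (1/2 * Real.log (1+K) + (n:ℝ) * max 0 (- Real.log ‖y - x‖))) with hgdom
  have hgnonneg : ∀ y, 0 ≤ gdom y := by
    intro y
    apply Set.indicator_nonneg
    intro z hz
    have h1 : 0 ≤ Real.log (1+K) := Real.log_nonneg (by linarith)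
    have h2 : 0 ≤ max 0 (- Real.log ‖z - x‖) := le_max_left _ _
    positivity
  have hgint : Integrable gdom volume := by
    apply IntegrableOn.integrable_indicator ?_ measurableSet_ball
    apply Integrable.const_mul
    apply Integrable.add
    · apply integrableOn_const measure_ball_lt_top.ne
    · exact ((integrable_maxlog x).const_mul _).integrableOn
  -- the a.e. facts
  have hae : ∀ᵐ y ∂(volume.restrict Ω), y ∈ Ω ∧ ω t y ≤ 0 ∧ y ≠ x := by
    refine ((ae_restrict_mem hΩmeas).and ((hsign t ht).and ?_))
    apply ae_restrict_of_ae
    have : volume ({x} : Set ℂ) = 0 := measure_singleton x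
    filter_upwards [measure_eq_zero_iff_ae_notMem.mp this] with y hy
    exact fun h => hy (by rw [h]; exact rfl)
  -- pointwise comparisons
  have hkey : ∀ y, y ∈ Ω → ω t y ≤ 0 → y ≠ x → (G y ≤ f y ∧ ‖f y‖ ≤ gdom y) := by
    intro y hyΩ hy2 hy3
    by_cases hωy : ω t y = 0
    · constructor
      · have hGy : G y = 0 := by
          simp only [hG]
          by_cases hyA : y ∈ Aᶜ
          · rw [Set.indicator_of_mem hyA, hωy, neg_zero, mul_zero]
          · rw [Set.indicator_of_notMem hyA, mul_zero]
        have hfy : f y = 0 := by simp only [hf, hωy, mul_zero]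
        rw [hGy, hfy]
      · have hfy : f y = 0 := by simp only [hf, hωy, mul_zero]
        rw [hfy, norm_zero]
        exact hgnonneg y
    · have hyball : y ∈ Metric.ball (0:ℂ) R := hsupp t ht y hωy
      have hyD : y ∈ D := ⟨hyball, hyΩ⟩
      have hbT : 1 < ‖T y‖ := hmapsTo hyΩ
      have hbM : ‖T y‖ ≤ M := hMbound y hyD
      have hTne : T x ≠ T y := by
        intro h
        exact hy3 (hinj hyΩ hxΩ h.symm)
      constructor
      · -- lower bound
        by_cases hyA : y ∈ A
        · have hGy : G y = 0 := by
            simp only [hG]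
            rw [Set.indicator_of_notMem (by simpa using hyA), mul_zero]
          rw [hGy]
          simp only [hf]
          have hpr := mul_nonneg (neg_nonneg.mpr (log_ratio_nonpos haT.le hbT.le))
            (neg_nonneg.mpr hy2)
          rw [neg_mul_neg] at hpr
          exact hpr
        · have hGy : G y = (c₁ * X) * (- ω t y) := by
            simp only [hG]
            rw [Set.indicator_of_mem (by simpa using hyA)]
          have hεy : ε ≤ ‖T y‖^2 - 1 := by
            have : ¬ (‖T y‖^2 ≤ 1 + ε) := by
              intro hcon
              exact hyA ((hSchar n₀ y).mpr ⟨hyD, hcon⟩)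
            push_neg at this
            linarith
          have hkey2 := neg_log_ratio_ge haT hbT hTne hεpos hεy haM hbM
          have hc₁X : c₁ * X ≤ - Real.log (‖T x - T y‖ / (‖T x - cstar (T y)‖ * ‖T y‖)) := by
            calc c₁ * X = Real.log 2 / 2 * (min (ε/(4*M^2)) (1/M) * (‖T x‖ - 1)) := by
                  simp only [hc₁, hc₀, hX]; ring
            _ ≤ _ := hkey2
          have hfy : f y = (- Real.log (‖T x - T y‖ / (‖T x - cstar (T y)‖ * ‖T y‖))) * (- ω t y) := by
            simp only [hf]; ring
          rw [hGy, hfy]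
          exact mul_le_mul_of_nonneg_right hc₁X (by linarith)
      · -- upper bound
        have hr0 : 0 < ‖y - x‖ := norm_pos_iff.mpr (sub_ne_zero_of_ne hy3)
        set d : ℝ := c * (min 1 ‖y - x‖)^n with hd
        have hd0 : 0 < d := by
          have : 0 < min 1 ‖y - x‖ := lt_min one_pos hr0
          positivity
        have hdle : d ≤ ‖T x - T y‖ := by
          rw [norm_sub_rev]
          exact hlow y hyΩ hy3
        have habs := neg_log_ratio_le haT hbT hd0 hdle haM hbM
        have hchain : (1/2) * Real.log (1 + M^4/d^2)
            ≤ 1/2 * Real.log (1+K) + (n:ℝ) * max 0 (- Real.log ‖y - x‖) := by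
          have := log_bound_aux (Mq := M^4) (c := c) (r := ‖y - x‖) n (by positivity) hcpos hr0
          simp only [← hd] at this
          calc (1/2) * Real.log (1 + M^4/d^2)
              ≤ (1/2) * (Real.log (1+K) + 2*(n:ℝ)*(max 0 (- Real.log ‖y - x‖))) := by
                simp only [hKdef]
                linarith
          _ = 1/2 * Real.log (1+K) + (n:ℝ) * max 0 (- Real.log ‖y - x‖) := by ring
        have hfy : ‖f y‖ = |Real.log (‖T x - T y‖ / (‖T x - cstar (T y)‖ * ‖T y‖))| * |ω t y| := by
          simp only [hf, Real.norm_eq_abs, abs_mul]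
        have hgy : gdom y = rinf * (1/2 * Real.log (1+K) + (n:ℝ) * max 0 (- Real.log ‖y - x‖)) := by
          simp only [hgdom]
          rw [Set.indicator_of_mem hyball]
        rw [hfy, hgy]
        have hω_le : |ω t y| ≤ rinf := hLinf t ht y
        have h1 : 0 ≤ |Real.log (‖T x - T y‖ / (‖T x - cstar (T y)‖ * ‖T y‖))| := abs_nonneg _
        calc |Real.log (‖T x - T y‖ / (‖T x - cstar (T y)‖ * ‖T y‖))| * |ω t y|
            ≤ ((1/2) * Real.log (1 + M^4/d^2)) * rinf := by
              apply mul_le_mul habs hω_le (abs_nonneg _)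
                (mul_nonneg (by norm_num) (Real.log_nonneg (le_add_of_nonneg_right (by positivity))))
        _ ≤ (1/2 * Real.log (1+K) + (n:ℝ) * max 0 (- Real.log ‖y - x‖)) * rinf := by
              apply mul_le_mul_of_nonneg_right hchain (by positivity)
        _ = rinf * (1/2 * Real.log (1+K) + (n:ℝ) * max 0 (- Real.log ‖y - x‖)) := by ring
  -- integrability of f
  have hfint : Integrable f (volume.restrict Ω) := by
    apply (hgint.restrict (s := Ω)).mono' hfm
    filter_upwards [hae] with y hy
    exact (hkey y hy.1 hy.2.1 hy.2.2).2
  have hGint : Integrable G (volume.restrict Ω) := by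
    apply Integrable.const_mul
    exact (hωint.neg).indicator hAmeas.compl
  -- integral comparison
  have hint : ∫ y in Ω, G y ≤ ∫ y in Ω, f y := by
    apply integral_mono_ae hGint hfint
    filter_upwards [hae] with y hy
    exact (hkey y hy.1 hy.2.1 hy.2.2).1
  -- compute the integral of G
  have hGval : ∫ y in Ω, G y = (c₁ * X) * ∫ y in Ω \ A, (- ω t y) := by
    simp only [hG]
    rw [integral_const_mul, setIntegral_indicator hAmeas.compl, ← Set.diff_eq]
  have hωneg_int : ∫ y in Ω, (- ω t y) = r₁ := by
    have h1 : ∫ y in Ω, (- ω t y) = ∫ y in Ω, |ω t y| := by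
      apply integral_congr_ae
      filter_upwards [hsign t ht] with y hy
      rw [abs_of_nonpos hy]
    rw [h1, (hL1 t ht).2]
  have hAfin : volume A < ⊤ :=
    lt_of_le_of_lt (measure_mono ((hSsub n₀).trans Set.inter_subset_left)) measure_ball_lt_top
  have hAbound : ∫ y in A, (- ω t y) ≤ r₁/2 := by
    have h1 : ∫ y in A, (- ω t y) ≤ ∫ y in A, rinf := by
      apply setIntegral_mono_on (IntegrableOn.mono_set hωint.neg hAΩ)
        (integrableOn_const hAfin.ne) hAmeas
      intro y hy
      have h2 : - ω t y ≤ |ω t y| := neg_le_abs _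
      show - ω t y ≤ rinf
      linarith [hLinf t ht y]
    have h2 : ∫ y in A, (rinf:ℝ) = (volume A).toReal • rinf := setIntegral_const rinf
    have h3 : (volume A).toReal * rinf ≤ (r₁/(2*rinf)) * rinf :=
      mul_le_mul_of_nonneg_right hAvol hrinf.le
    have h4 : (r₁/(2*rinf)) * rinf = r₁/2 := by field_simp
    rw [h2] at h1
    simp only [smul_eq_mul] at h1
    linarith
  have hdiffint : ∫ y in Ω \ A, (- ω t y)
      = (∫ y in Ω, - ω t y) - ∫ y in A, - ω t y :=
    integral_diff hAmeas hωint.neg hAΩ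
  have hGlower : (c₁ * X) * (r₁/2) ≤ ∫ y in Ω, G y := by
    rw [hGval]
    apply mul_le_mul_of_nonneg_left ?_ (by positivity)
    rw [hdiffint, hωneg_int]
    linarith
  have hIlower : (c₁ * X) * (r₁/2) ≤ ∫ y in Ω, f y := le_trans hGlower hint
  -- final assembly
  have hπ : (0:ℝ) < 2*Real.pi := by positivity
  have hαterm : 0 ≤ (α/(2*Real.pi)) * Real.log ‖T x‖ :=
    mul_nonneg (div_nonneg hα hπ.le) (Real.log_nonneg haT.le)
  show (1/(2*Real.pi)) * (c₁ * (r₁/2)) * (‖T x‖ - 1) ≤ L1fun Ω T α (ω t) x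
  unfold L1fun
  rw [← hf]
  have hterm1 : (1/(2*Real.pi)) * (c₁ * (r₁/2)) * X ≤ (1/(2*Real.pi)) * ∫ y in Ω, f y := by
    have := mul_le_mul_of_nonneg_left hIlower (by positivity : (0:ℝ) ≤ 1/(2*Real.pi))
    calc (1/(2*Real.pi)) * (c₁ * (r₁/2)) * X = (1/(2*Real.pi)) * ((c₁ * X) * (r₁/2)) := by ring
    _ ≤ (1/(2*Real.pi)) * ∫ y in Ω, f y := this
  have hXX : ‖T x‖ - 1 = X := rfl
  rw [hXX]
  linarith

end
end

section
/- Let D = B(0,1) ⊂ ℝ² be the open unit disk and let h : D → ℝ be a bounded measurable function. Then there exists a constant C_h, depending only on ‖h‖_{L^∞(D)}, such that for every x ∈ D with 0 < |x| < 1: (1/|x|) ∫_D |h(y)| / ( |y−x| |y−x*| ) dy ≤ C_h ( |ln(1−|x|)| + 1 ), where x* := x/|x|². -/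
noncomputable section
open MeasureTheory Filter Metric Complex Set

open scoped ENNReal

private lemma radial_lintegral (f : ℝ → ℝ≥0∞) (hf : Measurable f) :
    ∫⁻ z : ℂ, f ‖z‖ = 2 * (NNReal.pi : ℝ≥0∞) * ∫⁻ r in Set.Ioi (0:ℝ), ENNReal.ofReal r * f r := by
  have key := (MeasureTheory.Measure.measurePreserving_homeomorphUnitSphereProd
      (volume : Measure ℂ)).lintegral_comp
      (f := fun p : sphere (0:ℂ) 1 × Set.Ioi (0:ℝ) => f p.2)
      (hf.comp (measurable_subtype_coe.comp measurable_snd))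
  have h1 : ∫⁻ a : ({0}ᶜ : Set ℂ), f ‖(a : ℂ)‖ ∂((volume : Measure ℂ).comap Subtype.val)
      = ∫⁻ z : ℂ, f ‖z‖ := by
    rw [lintegral_subtype_comap (measurableSet_singleton (0:ℂ)).compl (fun z => f ‖z‖),
      MeasureTheory.restrict_compl_singleton]
  have h2 : ∫⁻ a : ({0}ᶜ : Set ℂ), f ‖(a : ℂ)‖ ∂((volume : Measure ℂ).comap Subtype.val)
      = ∫⁻ p : sphere (0:ℂ) 1 × Set.Ioi (0:ℝ), f p.2
          ∂(((volume : Measure ℂ).toSphere).prod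
            (Measure.volumeIoiPow (Module.finrank ℝ ℂ - 1))) := by
    rw [← key]
    exact lintegral_congr fun a => by simp
  have h3 : ∫⁻ p : sphere (0:ℂ) 1 × Set.Ioi (0:ℝ), f p.2
        ∂(((volume : Measure ℂ).toSphere).prod
          (Measure.volumeIoiPow (Module.finrank ℝ ℂ - 1)))
      = ((volume : Measure ℂ).toSphere Set.univ) *
          ∫⁻ r : Set.Ioi (0:ℝ), f r ∂(Measure.volumeIoiPow 1) := by
    rw [show Module.finrank ℝ ℂ - 1 = 1 by rw [Complex.finrank_real_complex]]
    rw [← lintegral_map (f := fun r : Set.Ioi (0:ℝ) => f r) (hf.comp measurable_subtype_coe) measurable_snd,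
      Measure.map_snd_prod, lintegral_smul_measure, smul_eq_mul]
  have h4 : ∫⁻ r : Set.Ioi (0:ℝ), f r ∂(Measure.volumeIoiPow 1)
      = ∫⁻ r in Set.Ioi (0:ℝ), ENNReal.ofReal r * f r := by
    rw [Measure.volumeIoiPow,
      lintegral_withDensity_eq_lintegral_mul _
        ((measurable_subtype_coe.pow_const 1).ennreal_ofReal)
        (g := fun r : Set.Ioi (0:ℝ) => f r) (hf.comp measurable_subtype_coe)]
    rw [← lintegral_subtype_comap measurableSet_Ioi
      (fun r : ℝ => ENNReal.ofReal r * f r)]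
    exact lintegral_congr fun a => by simp [pow_one]
  have h5 : ((volume : Measure ℂ).toSphere Set.univ) = 2 * (NNReal.pi : ℝ≥0∞) := by
    rw [Measure.toSphere_apply_univ, Complex.finrank_real_complex, Complex.volume_ball]
    simp
  rw [← h1, h2, h3, h4, h5]

private lemma lint_inv_ball {ε : ℝ} (hε : 0 < ε) :
    ∫⁻ z in Metric.ball (0:ℂ) ε, ENNReal.ofReal ‖z‖⁻¹
      = ENNReal.ofReal (2 * Real.pi * ε) := by
  set f : ℝ → ℝ≥0∞ := fun r => if r < ε then ENNReal.ofReal r⁻¹ else 0 with hfdef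
  have hfm : Measurable f :=
    Measurable.ite measurableSet_Iio (measurable_inv.ennreal_ofReal) measurable_const
  have h1 : ∫⁻ z in Metric.ball (0:ℂ) ε, ENNReal.ofReal ‖z‖⁻¹ = ∫⁻ z : ℂ, f ‖z‖ := by
    rw [← lintegral_indicator measurableSet_ball]
    refine lintegral_congr fun z => ?_
    by_cases hz : z ∈ Metric.ball (0:ℂ) ε
    · rw [Set.indicator_of_mem hz]; simp only [hfdef]
      rw [if_pos (mem_ball_zero_iff.mp hz)]
    · rw [Set.indicator_of_notMem hz]
      have : ¬ ‖z‖ < ε := fun hlt => hz (mem_ball_zero_iff.mpr hlt)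
      simp only [hfdef]; rw [if_neg this]
  have h2 : ∫⁻ r in Set.Ioi (0:ℝ), ENNReal.ofReal r * f r = ENNReal.ofReal ε := by
    have hcg : ∀ r ∈ Set.Ioi (0:ℝ), ENNReal.ofReal r * f r
        = (Set.Ioo (0:ℝ) ε).indicator (fun _ => 1) r := by
      intro r hr
      rcases lt_or_ge r ε with hcase | hcase
      · have hmem : r ∈ Set.Ioo (0:ℝ) ε := ⟨hr, hcase⟩
        rw [Set.indicator_of_mem hmem]
        simp only [hfdef, if_pos hcase]
        rw [← ENNReal.ofReal_mul (le_of_lt hr), mul_inv_cancel₀ (ne_of_gt hr)]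
        simp
      · have hmem : r ∉ Set.Ioo (0:ℝ) ε := fun hm => absurd hm.2 (not_lt.mpr hcase)
        rw [Set.indicator_of_notMem hmem]
        simp [hfdef, not_lt.mpr hcase]
    rw [setLIntegral_congr_fun measurableSet_Ioi
      hcg]
    rw [lintegral_indicator measurableSet_Ioo, setLIntegral_one,
      Measure.restrict_apply measurableSet_Ioo]
    rw [Set.inter_eq_self_of_subset_left (fun r hr => hr.1)]
    simp [Real.volume_Ioo]
  rw [h1, radial_lintegral f hfm, h2]
  rw [ENNReal.ofReal_mul (by positivity), ENNReal.ofReal_mul (by norm_num : (0:ℝ) ≤ 2)]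
  rw [← NNReal.coe_real_pi, ENNReal.ofReal_coe_nnreal]
  rw [show ENNReal.ofReal 2 = (2 : ℝ≥0∞) by norm_num]

private lemma lint_inv_sq_annulus {ε : ℝ} (hε : 0 < ε) (hε2 : ε < 2) :
    ∫⁻ z in Metric.ball (0:ℂ) 2 \ Metric.ball (0:ℂ) ε, ENNReal.ofReal ((‖z‖ ^ 2)⁻¹)
      = ENNReal.ofReal (2 * Real.pi * (Real.log 2 - Real.log ε)) := by
  set f : ℝ → ℝ≥0∞ := fun r => if r ∈ Set.Ico ε 2 then ENNReal.ofReal ((r ^ 2)⁻¹) else 0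
    with hfdef
  have hfm : Measurable f :=
    Measurable.ite measurableSet_Ico
      ((measurable_id.pow_const 2).inv.ennreal_ofReal) measurable_const
  have h1 : ∫⁻ z in Metric.ball (0:ℂ) 2 \ Metric.ball (0:ℂ) ε,
      ENNReal.ofReal ((‖z‖ ^ 2)⁻¹) = ∫⁻ z : ℂ, f ‖z‖ := by
    rw [← lintegral_indicator (measurableSet_ball.diff measurableSet_ball)]
    refine lintegral_congr fun z => ?_
    by_cases hz : z ∈ Metric.ball (0:ℂ) 2 \ Metric.ball (0:ℂ) ε
    · have hm : ‖z‖ ∈ Set.Ico ε 2 :=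
        ⟨not_lt.mp (fun hlt => hz.2 (mem_ball_zero_iff.mpr hlt)),
          mem_ball_zero_iff.mp hz.1⟩
      rw [Set.indicator_of_mem hz]; simp only [hfdef]; rw [if_pos hm]
    · have hm : ‖z‖ ∉ Set.Ico ε 2 := by
        intro hm
        exact hz ⟨mem_ball_zero_iff.mpr hm.2, fun hin => absurd (mem_ball_zero_iff.mp hin)
          (not_lt.mpr hm.1)⟩
      rw [Set.indicator_of_notMem hz]; simp only [hfdef]; rw [if_neg hm]
  have h2 : ∫⁻ r in Set.Ioi (0:ℝ), ENNReal.ofReal r * f r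
      = ENNReal.ofReal (Real.log 2 - Real.log ε) := by
    have hcg : ∀ r ∈ Set.Ioi (0:ℝ), ENNReal.ofReal r * f r
        = (Set.Ico ε 2).indicator (fun r => ENNReal.ofReal r⁻¹) r := by
      intro r hr
      by_cases hm : r ∈ Set.Ico ε 2
      · rw [Set.indicator_of_mem hm]
        simp only [hfdef, if_pos hm]
        rw [← ENNReal.ofReal_mul (le_of_lt hr)]
        congr 1
        rw [sq, mul_inv, ← mul_assoc, mul_inv_cancel₀ (ne_of_gt hr), one_mul]
      · rw [Set.indicator_of_notMem hm]; simp only [hfdef]; rw [if_neg hm, mul_zero]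
    rw [setLIntegral_congr_fun measurableSet_Ioi hcg]
    rw [lintegral_indicator measurableSet_Ico, Measure.restrict_restrict measurableSet_Ico]
    rw [Set.inter_eq_self_of_subset_left
      (show Set.Ico ε 2 ⊆ Set.Ioi 0 from fun r hr => lt_of_lt_of_le hε hr.1)]
    rw [setLIntegral_congr (Ico_ae_eq_Ioc (μ := volume) (a := ε) (b := 2))]
    have hint : IntegrableOn (fun r : ℝ => r⁻¹) (Set.Ioc ε 2) volume := by
      have : IntervalIntegrable (fun r : ℝ => r⁻¹) volume ε 2 :=
        intervalIntegral.intervalIntegrable_inv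
          (fun x hx => ne_of_gt (lt_of_lt_of_le hε
            (by rw [Set.uIcc_of_le hε2.le] at hx; exact hx.1))) continuousOn_id
      rwa [intervalIntegrable_iff_integrableOn_Ioc_of_le hε2.le] at this
    rw [← ofReal_integral_eq_lintegral_ofReal hint]
    · congr 1
      rw [← intervalIntegral.integral_of_le hε2.le, integral_inv_of_pos hε (by norm_num),
        Real.log_div (by norm_num) (ne_of_gt hε)]
    · filter_upwards [ae_restrict_mem measurableSet_Ioc] with r hr
      exact inv_nonneg.mpr (le_of_lt (lt_of_lt_of_le hε hr.1.le))
  rw [h1, radial_lintegral f hfm, h2]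
  rw [ENNReal.ofReal_mul (by positivity), ENNReal.ofReal_mul (by norm_num : (0:ℝ) ≤ 2)]
  rw [← NNReal.coe_real_pi, ENNReal.ofReal_coe_nnreal]
  rw [show ENNReal.ofReal 2 = (2 : ℝ≥0∞) by norm_num]

private lemma lint_shift (x : ℂ) (g : ℂ → ℝ≥0∞) {s : Set ℂ} (hs : MeasurableSet s) :
    ∫⁻ y in {y : ℂ | y - x ∈ s}, g (y - x) = ∫⁻ z in s, g z := by
  have hpre : MeasurableSet {y : ℂ | y - x ∈ s} :=
    (measurable_sub_const x) hs
  rw [← lintegral_indicator hpre, ← lintegral_indicator hs]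
  have hid : ∀ y : ℂ, ({y : ℂ | y - x ∈ s}).indicator (fun y => g (y - x)) y
      = s.indicator g (y - x) := by
    intro y
    by_cases hy : y - x ∈ s
    · rw [Set.indicator_of_mem (show y ∈ {y : ℂ | y - x ∈ s} from hy)]
      exact (Set.indicator_of_mem hy g).symm
    · rw [Set.indicator_of_notMem (show y ∉ {y : ℂ | y - x ∈ s} from hy)]
      exact (Set.indicator_of_notMem hy g).symm
  rw [lintegral_congr hid]
  exact lintegral_sub_right_eq_self (fun z => s.indicator g z) x

private lemma key_norm_eq (x y : ℂ) (hx : x ≠ 0) :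
    ‖x‖ * ‖y - cstar x‖ = ‖(‖x‖ : ℂ) * y - x / (‖x‖ : ℂ)‖ := by
  have ha : (0:ℝ) < ‖x‖ := norm_pos_iff.mpr hx
  have hane : ((‖x‖ : ℝ) : ℂ) ≠ 0 := Complex.ofReal_ne_zero.mpr (ne_of_gt ha)
  have hmul : ((‖x‖ : ℝ) : ℂ) * (y - cstar x) = (‖x‖ : ℂ) * y - x / (‖x‖ : ℂ) := by
    have hstep : ((‖x‖ : ℂ)) * (x / ((‖x‖ : ℂ)) ^ 2) = x / ((‖x‖ : ℂ)) := by
      rw [sq, mul_div_assoc', mul_div_mul_left _ _ hane]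
    rw [cstar, mul_sub, hstep]
  rw [← hmul, norm_mul, Complex.norm_real, Real.norm_eq_abs, abs_of_pos ha]

private lemma key1 (x y : ℂ) (hx : x ≠ 0) (hx1 : ‖x‖ ≤ 1) (hy : ‖y‖ ≤ 1) :
    1 - ‖x‖ ≤ ‖x‖ * ‖y - cstar x‖ := by
  have ha : (0:ℝ) < ‖x‖ := norm_pos_iff.mpr hx
  rw [key_norm_eq x y hx]
  have h1 : ‖x / (‖x‖ : ℂ)‖ = 1 := by
    rw [norm_div, Complex.norm_real, Real.norm_eq_abs, abs_of_pos ha, div_self (ne_of_gt ha)]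
  have h2 : ‖(‖x‖ : ℂ) * y‖ = ‖x‖ * ‖y‖ := by
    rw [norm_mul, Complex.norm_real, Real.norm_eq_abs, abs_of_pos ha]
  have h3 : ‖x / (‖x‖ : ℂ)‖ - ‖(‖x‖ : ℂ) * y‖ ≤ ‖(‖x‖ : ℂ) * y - x / (‖x‖ : ℂ)‖ := by
    rw [norm_sub_rev]
    exact norm_sub_norm_le _ _
  nlinarith [norm_nonneg y]

private lemma key2 (x y : ℂ) (hx : x ≠ 0) (hx1 : ‖x‖ ≤ 1) (hy : ‖y‖ ≤ 1) :
    ‖y - x‖ ≤ ‖x‖ * ‖y - cstar x‖ := by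
  have ha : (0:ℝ) < ‖x‖ := norm_pos_iff.mpr hx
  rw [key_norm_eq x y hx]
  have hsq : ∀ z : ℂ, ‖z‖ ^ 2 = z.re ^ 2 + z.im ^ 2 := fun z => by
    rw [Complex.sq_norm, Complex.normSq_apply]; ring
  have h2 : ‖y - x‖ ^ 2 ≤ ‖(‖x‖ : ℂ) * y - x / (‖x‖ : ℂ)‖ ^ 2 := by
    rw [hsq, hsq]
    have hare : ((‖x‖ : ℂ) * y - x / (‖x‖ : ℂ)).re = ‖x‖ * y.re - x.re / ‖x‖ := by
      simp [Complex.sub_re, Complex.mul_re, Complex.div_ofReal_re]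
    have haim : ((‖x‖ : ℂ) * y - x / (‖x‖ : ℂ)).im = ‖x‖ * y.im - x.im / ‖x‖ := by
      simp [Complex.sub_im, Complex.mul_im, Complex.div_ofReal_im]
    rw [hare, haim, Complex.sub_re, Complex.sub_im]
    have hx2 : x.re ^ 2 + x.im ^ 2 = ‖x‖ ^ 2 := (hsq x).symm
    have hy2 : y.re ^ 2 + y.im ^ 2 ≤ 1 := by
      have := hsq y; nlinarith [norm_nonneg y]
    have hxle : ‖x‖ ^ 2 ≤ 1 := by nlinarith
    rw [div_eq_mul_inv, div_eq_mul_inv]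
    have hinv : ‖x‖ * ‖x‖⁻¹ = 1 := mul_inv_cancel₀ (ne_of_gt ha)
    nlinarith [sq_nonneg (‖x‖⁻¹), mul_pos ha ha,
      mul_nonneg (mul_nonneg (sq_nonneg ‖x‖) (sub_nonneg.mpr hy2)) (sub_nonneg.mpr hxle)]
  calc ‖y - x‖ = Real.sqrt (‖y - x‖ ^ 2) := (Real.sqrt_sq (norm_nonneg _)).symm
    _ ≤ Real.sqrt (‖(‖x‖ : ℂ) * y - x / (‖x‖ : ℂ)‖ ^ 2) := Real.sqrt_le_sqrt h2
    _ = ‖(‖x‖ : ℂ) * y - x / (‖x‖ : ℂ)‖ := Real.sqrt_sq (norm_nonneg _)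

/-- the bounded-domain analogue of Lemma `technic`: for `h` bounded
on the unit disk `D`,
`(1/|x|) ∫_D |h(y)|/(|y−x||y−x*|) dy ≤ C_h(|ln(1−|x|)| + 1)` for all `0 < |x| < 1`. -/
theorem technic_interior_disk
    (h : ℂ → ℝ) (hmeas : Measurable h)
    (M : ℝ) (hbdd : ∀ y ∈ Metric.ball (0:ℂ) 1, |h y| ≤ M) :
    ∃ Ch : ℝ, ∀ x : ℂ, 0 < ‖x‖ → ‖x‖ < 1 →
      (1 / ‖x‖) * (∫ y in Metric.ball (0:ℂ) 1, |h y| / (‖y - x‖ * ‖y - cstar x‖))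
        ≤ Ch * (|Real.log (1 - ‖x‖)| + 1) := by
  set M' : ℝ := max M 0 with hM'def
  have hM0 : 0 ≤ M' := le_max_right _ _
  refine ⟨M' * (2 * Real.pi) * (1 + Real.log 2), ?_⟩
  intro x hx0 hx1
  have hxne : x ≠ 0 := norm_pos_iff.mp hx0
  set ε : ℝ := 1 - ‖x‖ with hεdef
  have hε0 : 0 < ε := by rw [hεdef]; linarith
  have hε1 : ε < 1 := by rw [hεdef]; linarith
  have hε2 : ε < 2 := by linarith
  have hlogε : Real.log ε ≤ 0 := Real.log_nonpos hε0.le hε1.le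
  have hlog2 : 0 ≤ Real.log 2 := Real.log_nonneg one_le_two
  set F : ℂ → ℝ := fun y => |h y| / (‖y - x‖ * ‖y - cstar x‖) with hFdef
  have hFnn : ∀ y, 0 ≤ F y := fun y =>
    div_nonneg (abs_nonneg _) (mul_nonneg (norm_nonneg _) (norm_nonneg _))
  have hm1 : Measurable fun y : ℂ => ‖y - x‖ :=
    (continuous_id.sub continuous_const).norm.measurable
  have hm2 : Measurable fun y : ℂ => ‖y - cstar x‖ :=
    (continuous_id.sub continuous_const).norm.measurable
  have hFmeas : Measurable F := (hmeas.abs).div (hm1.mul hm2)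
  set g : ℂ → ℝ≥0∞ := fun y => ENNReal.ofReal ((‖y - x‖ * max ‖y - x‖ ε)⁻¹) with hgdef
  have hgmeas : Measurable g := ((hm1.mul (hm1.max measurable_const)).inv).ennreal_ofReal
  -- pointwise bound on the disk
  have hpt : ∀ y ∈ Metric.ball (0:ℂ) 1,
      ENNReal.ofReal (F y) ≤ ENNReal.ofReal (‖x‖ * M') * g y := by
    intro y hy
    rw [hgdef, ← ENNReal.ofReal_mul (mul_nonneg (norm_nonneg x) hM0)]
    apply ENNReal.ofReal_le_ofReal
    by_cases hb : ‖y - x‖ = 0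
    · have : F y = 0 := by rw [hFdef]; simp only; rw [hb, zero_mul, div_zero]
      rw [this]
      positivity
    · have hbpos : 0 < ‖y - x‖ := lt_of_le_of_ne (norm_nonneg _) (Ne.symm hb)
      have hc1 := key1 x y hxne hx1.le (mem_ball_zero_iff.mp hy).le
      have hc2 := key2 x y hxne hx1.le (mem_ball_zero_iff.mp hy).le
      have hden : max ‖y - x‖ ε ≤ ‖x‖ * ‖y - cstar x‖ := max_le hc2 hc1
      have hmaxpos : 0 < max ‖y - x‖ ε := lt_max_of_lt_right hε0
      have hacpos : 0 < ‖x‖ * ‖y - cstar x‖ := lt_of_lt_of_le hmaxpos hden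
      have hcpos : 0 < ‖y - cstar x‖ := by
        rcases mul_pos_iff.mp hacpos with ⟨_, hc⟩ | ⟨ha', _⟩
        · exact hc
        · exact absurd ha' (not_lt.mpr (norm_nonneg x))
      calc F y = |h y| / (‖y - x‖ * ‖y - cstar x‖) := rfl
        _ ≤ M' / (‖y - x‖ * ‖y - cstar x‖) := by
            gcongr
            exact le_trans (hbdd y hy) (le_max_left M 0)
        _ = ‖x‖ * M' * (‖y - x‖ * (‖x‖ * ‖y - cstar x‖))⁻¹ := by
            rw [div_eq_mul_inv,
              show (‖y - x‖ * (‖x‖ * ‖y - cstar x‖))⁻¹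
                = ‖x‖⁻¹ * (‖y - x‖ * ‖y - cstar x‖)⁻¹ by
                  rw [mul_inv, mul_inv, mul_inv]; ring,
              show ‖x‖ * M' * (‖x‖⁻¹ * (‖y - x‖ * ‖y - cstar x‖)⁻¹)
                = (‖x‖ * ‖x‖⁻¹) * (M' * (‖y - x‖ * ‖y - cstar x‖)⁻¹) by ring,
              mul_inv_cancel₀ (ne_of_gt hx0), one_mul]
        _ ≤ ‖x‖ * M' * (‖y - x‖ * max ‖y - x‖ ε)⁻¹ := by
            apply mul_le_mul_of_nonneg_left _ (mul_nonneg (norm_nonneg x) hM0)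
            apply inv_anti₀ (mul_pos hbpos hmaxpos)
            exact mul_le_mul_of_nonneg_left hden hbpos.le
  -- near part
  have hshift1 : ∫⁻ y in Metric.ball x ε, ENNReal.ofReal ‖y - x‖⁻¹
      = ENNReal.ofReal (2 * Real.pi * ε) := by
    have hset : Metric.ball x ε = {y : ℂ | y - x ∈ Metric.ball (0:ℂ) ε} := by
      ext y; simp [Metric.mem_ball, dist_eq_norm, mem_ball_zero_iff]
    rw [hset, lint_shift x (fun z => ENNReal.ofReal ‖z‖⁻¹) measurableSet_ball,
      lint_inv_ball hε0]
  have hnear : ∫⁻ y in Metric.ball x ε, g y ≤ ENNReal.ofReal (2 * Real.pi) := by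
    have hptn : ∀ y ∈ Metric.ball x ε,
        g y ≤ ENNReal.ofReal ε⁻¹ * ENNReal.ofReal ‖y - x‖⁻¹ := by
      intro y _
      rw [hgdef, ← ENNReal.ofReal_mul (inv_nonneg.mpr hε0.le)]
      apply ENNReal.ofReal_le_ofReal
      by_cases hb : ‖y - x‖ = 0
      · rw [hb]; simp
      · have hbpos : 0 < ‖y - x‖ := lt_of_le_of_ne (norm_nonneg _) (Ne.symm hb)
        rw [← mul_inv]
        apply inv_anti₀ (mul_pos hε0 hbpos)
        calc ε * ‖y - x‖ = ‖y - x‖ * ε := mul_comm _ _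
          _ ≤ ‖y - x‖ * max ‖y - x‖ ε := mul_le_mul_of_nonneg_left (le_max_right _ _) hbpos.le
    calc ∫⁻ y in Metric.ball x ε, g y
        ≤ ∫⁻ y in Metric.ball x ε, ENNReal.ofReal ε⁻¹ * ENNReal.ofReal ‖y - x‖⁻¹ :=
          setLIntegral_mono (measurable_const.mul ((hm1.inv).ennreal_ofReal)) hptn
      _ = ENNReal.ofReal ε⁻¹ * ∫⁻ y in Metric.ball x ε, ENNReal.ofReal ‖y - x‖⁻¹ :=
          lintegral_const_mul _ ((hm1.inv).ennreal_ofReal)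
      _ = ENNReal.ofReal ε⁻¹ * ENNReal.ofReal (2 * Real.pi * ε) := by rw [hshift1]
      _ = ENNReal.ofReal (ε⁻¹ * (2 * Real.pi * ε)) :=
          (ENNReal.ofReal_mul (inv_nonneg.mpr hε0.le)).symm
      _ = ENNReal.ofReal (2 * Real.pi) := by
          congr 1
          field_simp
  -- far part
  have hshift2 : ∫⁻ y in Metric.ball x 2 \ Metric.ball x ε, ENNReal.ofReal ((‖y - x‖ ^ 2)⁻¹)
      = ENNReal.ofReal (2 * Real.pi * (Real.log 2 - Real.log ε)) := by
    have hset : Metric.ball x 2 \ Metric.ball x ε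
        = {y : ℂ | y - x ∈ Metric.ball (0:ℂ) 2 \ Metric.ball (0:ℂ) ε} := by
      ext y
      simp [Metric.mem_ball, dist_eq_norm, mem_ball_zero_iff]
    rw [hset, lint_shift x (fun z => ENNReal.ofReal ((‖z‖ ^ 2)⁻¹))
      (measurableSet_ball.diff measurableSet_ball), lint_inv_sq_annulus hε0 hε2]
  have hfar : ∫⁻ y in Metric.ball (0:ℂ) 1 \ Metric.ball x ε, g y
      ≤ ENNReal.ofReal (2 * Real.pi * (Real.log 2 - Real.log ε)) := by
    have hsub : Metric.ball (0:ℂ) 1 \ Metric.ball x ε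
        ⊆ Metric.ball x 2 \ Metric.ball x ε := by
      intro y hy
      refine ⟨?_, hy.2⟩
      have h1 : ‖y‖ < 1 := mem_ball_zero_iff.mp hy.1
      rw [Metric.mem_ball, dist_eq_norm]
      calc ‖y - x‖ ≤ ‖y‖ + ‖x‖ := norm_sub_le _ _
        _ < 2 := by linarith
    refine le_trans (lintegral_mono_set hsub) ?_
    have hpt2 : ∀ y ∈ Metric.ball x 2 \ Metric.ball x ε,
        g y ≤ ENNReal.ofReal ((‖y - x‖ ^ 2)⁻¹) := by
      intro y hy
      have hbe : ε ≤ ‖y - x‖ := by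
        have h2 := hy.2
        rw [Metric.mem_ball, dist_eq_norm, not_lt] at h2
        exact h2
      have hbpos : 0 < ‖y - x‖ := lt_of_lt_of_le hε0 hbe
      rw [hgdef]
      apply ENNReal.ofReal_le_ofReal
      apply inv_anti₀ (by positivity)
      rw [sq]
      exact mul_le_mul_of_nonneg_left (le_max_left _ _) hbpos.le
    refine le_trans (setLIntegral_mono ((hm1.pow_const 2).inv.ennreal_ofReal) hpt2) ?_
    exact hshift2.le
  -- combine
  have hD : ∫⁻ y in Metric.ball (0:ℂ) 1, g y
      ≤ ENNReal.ofReal (2 * Real.pi * (1 + Real.log 2 - Real.log ε)) := by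
    have hsplit : ∫⁻ y in Metric.ball (0:ℂ) 1, g y
        ≤ (∫⁻ y in Metric.ball x ε, g y)
          + ∫⁻ y in Metric.ball (0:ℂ) 1 \ Metric.ball x ε, g y := by
      refine le_trans (lintegral_mono_set ?_) (lintegral_union_le _ _ _)
      intro y hy
      by_cases hc : y ∈ Metric.ball x ε
      · exact Or.inl hc
      · exact Or.inr ⟨hy, hc⟩
    refine le_trans hsplit (le_trans (add_le_add hnear hfar) ?_)
    rw [← ENNReal.ofReal_add (by positivity)
      (mul_nonneg (by positivity) (by linarith))]
    apply ENNReal.ofReal_le_ofReal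
    apply le_of_eq
    ring
  have hlint : ∫⁻ y in Metric.ball (0:ℂ) 1, ENNReal.ofReal (F y)
      ≤ ENNReal.ofReal (‖x‖ * M' * (2 * Real.pi * (1 + Real.log 2 - Real.log ε))) := by
    calc ∫⁻ y in Metric.ball (0:ℂ) 1, ENNReal.ofReal (F y)
        ≤ ∫⁻ y in Metric.ball (0:ℂ) 1, ENNReal.ofReal (‖x‖ * M') * g y :=
          setLIntegral_mono (measurable_const.mul hgmeas) hpt
      _ = ENNReal.ofReal (‖x‖ * M') * ∫⁻ y in Metric.ball (0:ℂ) 1, g y :=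
          lintegral_const_mul _ hgmeas
      _ ≤ ENNReal.ofReal (‖x‖ * M')
          * ENNReal.ofReal (2 * Real.pi * (1 + Real.log 2 - Real.log ε)) :=
          mul_le_mul_right hD _
      _ = ENNReal.ofReal (‖x‖ * M' * (2 * Real.pi * (1 + Real.log 2 - Real.log ε))) :=
          (ENNReal.ofReal_mul (mul_nonneg (norm_nonneg x) hM0)).symm
  have hCnn : 0 ≤ ‖x‖ * M' * (2 * Real.pi * (1 + Real.log 2 - Real.log ε)) :=
    mul_nonneg (mul_nonneg (norm_nonneg x) hM0)
      (mul_nonneg (by positivity) (by linarith))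
  have hint : ∫ y in Metric.ball (0:ℂ) 1, F y
      ≤ ‖x‖ * M' * (2 * Real.pi * (1 + Real.log 2 - Real.log ε)) := by
    rw [MeasureTheory.integral_eq_lintegral_of_nonneg_ae
      (Filter.Eventually.of_forall hFnn) hFmeas.aestronglyMeasurable]
    have htr := ENNReal.toReal_mono ENNReal.ofReal_ne_top hlint
    rwa [ENNReal.toReal_ofReal hCnn] at htr
  calc (1 / ‖x‖) * ∫ y in Metric.ball (0:ℂ) 1, F y
      ≤ (1 / ‖x‖) * (‖x‖ * M' * (2 * Real.pi * (1 + Real.log 2 - Real.log ε))) :=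
        mul_le_mul_of_nonneg_left hint (by positivity)
    _ = M' * (2 * Real.pi * (1 + Real.log 2 - Real.log ε)) := by
        rw [show (1 / ‖x‖) * (‖x‖ * M' * (2 * Real.pi * (1 + Real.log 2 - Real.log ε)))
            = ((1 / ‖x‖) * ‖x‖) * (M' * (2 * Real.pi * (1 + Real.log 2 - Real.log ε))) by ring,
          one_div_mul_cancel (ne_of_gt hx0), one_mul]
    _ ≤ M' * (2 * Real.pi) * (1 + Real.log 2) * (|Real.log ε| + 1) := by
        rw [abs_of_nonpos hlogε]
        nlinarith [Real.pi_pos, hM0, hlog2, hlogε,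
          mul_nonneg (mul_nonneg hM0 Real.pi_pos.le)
            (mul_nonneg hlog2 (neg_nonneg.mpr hlogε))]


end
end
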